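/- arXiv:2605.29608 — 6 statements merged into one kernel-verified Lean document; each statement's English description precedes it below -/
import Mathlib

section
/- Let N ≥ 3 and let σ : ℤ/Nℤ → {−1,+1} be non-constant with exactly c maximal monochromatic arcs of value +1 (equivalently, c maximal monochromatic arcs of value −1). If A is any maximal monochromatic arc of σ, then: if c = 1 the flipped configuration σ^A is constant, and if c ≥ 2 the flipped configuration σ^A is non-constant with exactly c − 1 maximal monochromatic arcs of value +1 (and c − 1 of value −1). -/
open Real Finset

noncomputable section

/-- Spin value of a Boolean: `true ↦ +1`, `false ↦ -1`. -/
def spin (b : Bool) : ℝ := if b then 1 else -1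

/-- Configurations of the 1D Ising model on the cycle `ZMod N`. -/
abbrev Config (N : ℕ) := ZMod N → Bool

/-- Flip the spins of `σ` at all sites of `A`. -/
def flipSpins {N : ℕ} (A : Finset (ZMod N)) (σ : Config N) : Config N :=
  fun i => if i ∈ A then !(σ i) else σ i

/-- `A` is a (nonempty) arc `{a, a+1, …, a+k}` of the cycle. -/
def IsArc {N : ℕ} (A : Finset (ZMod N)) : Prop :=
  ∃ (a : ZMod N) (k : ℕ),
    A = Finset.image (fun t : ℕ => a + (t : ZMod N)) (Finset.range (k + 1))

/-- `σ` is constant on `A`. -/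
def ConstOn {N : ℕ} (σ : Config N) (A : Finset (ZMod N)) : Prop :=
  ∀ i ∈ A, ∀ j ∈ A, σ i = σ j

/-- The set of sites where two configurations differ. -/
def diffSet {N : ℕ} [NeZero N] (σ η : Config N) : Finset (ZMod N) :=
  Finset.univ.filter fun i => σ i ≠ η i

/-- The edge boundary of `A`: edges `(i, i+1)` with exactly one endpoint in `A`. -/
def edgeBoundary {N : ℕ} [NeZero N] (A : Finset (ZMod N)) : Finset (ZMod N) :=
  Finset.univ.filter fun i => ¬ ((i ∈ A) ↔ (i + 1 ∈ A))

/-- Edges `(i, i+1)` on which the spins of `σ` agree (i.e. `σ_i · σ_{i+1} = +1`). -/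
def Bplus {N : ℕ} [NeZero N] (σ : Config N) : Finset (ZMod N) :=
  Finset.univ.filter fun i => σ i = σ (i + 1)

open scoped Classical in
/-- Transition matrix of the Wolff dynamics for the 1D Ising model, with
`κ = 1 - e^{-2Ĵ}` and `κ̂ = e^{-2Ĵ}`. -/
noncomputable def PW (N : ℕ) [NeZero N] (J : ℝ) (σ η : Config N) : ℝ :=
  if IsArc (diffSet σ η) ∧ ConstOn σ (diffSet σ η) then
    if diffSet σ η = Finset.univ then
      ((N : ℝ) * exp (-2 * J) + (1 - exp (-2 * J))) * (1 - exp (-2 * J)) ^ (N - 1)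
    else
      ((diffSet σ η).card : ℝ) / N * (1 - exp (-2 * J)) ^ ((diffSet σ η).card - 1) *
        exp (-2 * J) ^ ((edgeBoundary (diffSet σ η) ∩ Bplus σ).card)
  else 0

/-- Energy functional `∑ i, σ_i σ_{i+1}` of a configuration. -/
noncomputable def energy (N : ℕ) [NeZero N] (σ : Config N) : ℝ :=
  ∑ i : ZMod N, spin (σ i) * spin (σ (i + 1))

/-- The Gibbs measure of the 1D Ising model with periodic boundary conditions. -/
noncomputable def gibbs (N : ℕ) [NeZero N] (J : ℝ) (σ : Config N) : ℝ :=
  exp (J * energy N σ) / ∑ η : Config N, exp (J * energy N η)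

/-- Expectation with respect to the Gibbs measure. -/
noncomputable def Emu (N : ℕ) [NeZero N] (J : ℝ) (f : Config N → ℝ) : ℝ :=
  ∑ σ : Config N, f σ * gibbs N J σ

/-- Dirichlet form of a transition matrix `P` with respect to a measure `μ`. -/
noncomputable def dirichlet (N : ℕ) [NeZero N] (P : Config N → Config N → ℝ)
    (μ : Config N → ℝ) (f : Config N → ℝ) : ℝ :=
  (1/2) * ∑ σ : Config N, ∑ η : Config N, (f σ - f η)^2 * P η σ * μ η

/-- `A` is a maximal monochromatic arc of `σ`: a maximal arc of the cycle on
which `σ` is constant. -/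
def IsMaxMonoArc {N : ℕ} (σ : Config N) (A : Finset (ZMod N)) : Prop :=
  IsArc A ∧ ConstOn σ A ∧
    ∀ B : Finset (ZMod N), IsArc B → ConstOn σ B → A ⊆ B → A = B

open scoped Classical in
/-- The number of maximal monochromatic arcs of `σ` on which `σ` is constantly
equal to the spin value `b` (`true ↦ +1`, `false ↦ −1`). -/
noncomputable def numArcs (N : ℕ) [NeZero N] (σ : Config N) (b : Bool) : ℕ :=
  (Finset.univ.filter fun A : Finset (ZMod N) =>
    IsMaxMonoArc σ A ∧ ∀ i ∈ A, σ i = b).card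

/-! For a non-constant configuration, every maximal monochromatic arc ends at exactly one domain
wall (a site `e` with `σ e ≠ σ (e + 1)`) and every domain wall ends exactly one maximal
monochromatic arc, so `numArcs σ b` counts the walls `e` with `σ e = b`. Since the number of `+`
sites is invariant under rotation, walls `+ → −` and `− → +` are equally numerous. Flipping a
maximal arc `{a, …, a + k}` destroys its two boundary walls `a - 1` and `a + k`, which have
opposite colours, and creates none, so each count drops by one; with no walls left the flipped
configuration is constant. -/

section Arc

variable {N : ℕ}

def arc (a : ZMod N) (k : ℕ) : Finset (ZMod N) :=
  Finset.image (fun t : ℕ => a + (t : ZMod N)) (Finset.range (k + 1))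

lemma isArc_arc (a : ZMod N) (k : ℕ) : IsArc (arc a k) := ⟨a, k, rfl⟩

lemma mem_arc {a x : ZMod N} {k : ℕ} : x ∈ arc a k ↔ ∃ t ≤ k, a + (t : ZMod N) = x := by
  simp [arc]

lemma add_mem_arc {a : ZMod N} {k t : ℕ} (h : t ≤ k) : a + (t : ZMod N) ∈ arc a k :=
  mem_arc.2 ⟨t, h, rfl⟩

lemma left_mem_arc (a : ZMod N) (k : ℕ) : a ∈ arc a k := by
  simpa using add_mem_arc (a := a) (Nat.zero_le k)

lemma right_mem_arc (a : ZMod N) (k : ℕ) : a + (k : ZMod N) ∈ arc a k := add_mem_arc le_rfl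

lemma insert_right_arc (a : ZMod N) (k : ℕ) :
    insert (a + k + 1) (arc a k) = arc a (k + 1) := by
  rw [arc, arc, Finset.range_add_one (n := k + 1), Finset.image_insert]
  push_cast
  rw [add_assoc]

lemma insert_left_arc (a : ZMod N) (k : ℕ) :
    insert (a - 1) (arc a k) = arc (a - 1) (k + 1) := by
  ext x
  simp only [Finset.mem_insert, mem_arc]
  constructor
  · rintro (rfl | ⟨t, ht, rfl⟩)
    · exact ⟨0, Nat.zero_le _, by simp⟩
    · exact ⟨t + 1, by omega, by push_cast; ring⟩
  · rintro ⟨_ | t, ht, rfl⟩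
    · simp
    · exact Or.inr ⟨t, by omega, by push_cast; ring⟩

lemma add_one_mem_arc {a x : ZMod N} {k : ℕ} (hx : x ∈ arc a k) (hne : x ≠ a + k) :
    x + 1 ∈ arc a k := by
  obtain ⟨t, ht, rfl⟩ := mem_arc.1 hx
  have htk : t < k := lt_of_le_of_ne ht (by rintro rfl; exact hne rfl)
  simpa [add_assoc] using add_mem_arc (a := a) (Nat.succ_le_of_lt htk)

lemma mem_arc_of_add_one_mem {a x : ZMod N} {k : ℕ} (hx : x + 1 ∈ arc a k) (hne : x ≠ a - 1) :
    x ∈ arc a k := by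
  obtain ⟨_ | t, ht, hxt⟩ := mem_arc.1 hx
  · exact absurd (by simpa [eq_sub_iff_add_eq] using hxt.symm) hne
  · exact mem_arc.2 ⟨t, by omega, by push_cast at hxt; linear_combination hxt⟩

lemma add_natCast_mem_arc_iff {a : ZMod N} {k t : ℕ} (hk : k < N) (ht : t < N) :
    a + (t : ZMod N) ∈ arc a k ↔ t ≤ k := by
  refine ⟨fun h => ?_, add_mem_arc⟩
  obtain ⟨s, hs, hst⟩ := mem_arc.1 h
  have := congrArg ZMod.val (add_left_cancel hst)
  rw [ZMod.val_cast_of_lt (hs.trans_lt hk), ZMod.val_cast_of_lt ht] at this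
  omega

lemma sub_one_notMem_arc {a : ZMod N} {k : ℕ} (hk : k + 1 < N) : a - 1 ∉ arc a k := by
  have h : a - 1 = a + ((N - 1 : ℕ) : ZMod N) := by
    rw [Nat.cast_sub (by omega), ZMod.natCast_self]; ring
  rw [h, add_natCast_mem_arc_iff (by omega) (by omega)]
  omega

lemma add_succ_notMem_arc {a : ZMod N} {k : ℕ} (hk : k + 1 < N) : a + k + 1 ∉ arc a k := by
  rw [add_assoc, ← Nat.cast_add_one, add_natCast_mem_arc_iff (by omega) hk]
  omega

lemma arc_eq_univ [NeZero N] (a : ZMod N) {k : ℕ} (hk : N ≤ k + 1) : arc a k = Finset.univ :=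
  Finset.eq_univ_of_forall fun x => mem_arc.2
    ⟨(x - a).val, by have := ZMod.val_lt (x - a); omega, by simp⟩

end Arc

section MaxMonoArc

variable {N : ℕ}

lemma constOn_insert {σ : Config N} {A : Finset (ZMod N)} {x y : ZMod N} (hA : ConstOn σ A)
    (hy : y ∈ A) (hxy : σ x = σ y) : ConstOn σ (insert x A) := by
  have key : ∀ i ∈ insert x A, σ i = σ y := by
    simp only [Finset.mem_insert, forall_eq_or_imp]
    exact ⟨hxy, fun i hi => hA i hi y hy⟩
  exact fun i hi j hj => (key i hi).trans (key j hj).symm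

lemma IsMaxMonoArc.mem_of_insert {σ : Config N} {A : Finset (ZMod N)} (hA : IsMaxMonoArc σ A)
    {x y : ZMod N} (hy : y ∈ A) (hxy : σ x = σ y) (harc : IsArc (insert x A)) : x ∈ A := by
  rw [hA.2.2 _ harc (constOn_insert hA.2.1 hy hxy) (Finset.subset_insert x A)]
  exact Finset.mem_insert_self x A

lemma isMaxMonoArc_of_maximal {σ : Config N} {A : Finset (ZMod N)}
    (hA : Maximal (fun B => IsArc B ∧ ConstOn σ B) A) : IsMaxMonoArc σ A :=
  ⟨hA.1.1, hA.1.2, fun _ hB hBc hAB => le_antisymm hAB (hA.2 (And.intro hB hBc) hAB)⟩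

lemma exists_isMaxMonoArc_superset [NeZero N] {σ : Config N} {B : Finset (ZMod N)}
    (hB : IsArc B) (hBc : ConstOn σ B) : ∃ A, IsMaxMonoArc σ A ∧ B ⊆ A := by
  obtain ⟨A, hBA, hA⟩ := exists_maximal_ge_of_wellFoundedGT
    (fun B => IsArc B ∧ ConstOn σ B) B ⟨hB, hBc⟩
  exact ⟨A, isMaxMonoArc_of_maximal hA, hBA⟩

lemma IsMaxMonoArc.exists_eq_arc [NeZero N] {σ : Config N} (hσ : ∃ i j : ZMod N, σ i ≠ σ j)
    {A : Finset (ZMod N)} (hA : IsMaxMonoArc σ A) :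
    ∃ a k, A = arc a k ∧ σ (a - 1) ≠ σ a ∧ σ (a + k + 1) ≠ σ a := by
  obtain ⟨a, k, rfl⟩ : ∃ a k, A = arc a k := hA.1
  have hAc := hA.2.1
  have hk : k + 1 < N := by
    by_contra! hN
    obtain ⟨i, j, hij⟩ := hσ
    rw [arc_eq_univ a hN] at hAc
    exact hij (hAc i (Finset.mem_univ i) j (Finset.mem_univ j))
  refine ⟨a, k, rfl, fun h => sub_one_notMem_arc (a := a) hk ?_,
    fun h => add_succ_notMem_arc (a := a) hk ?_⟩
  · exact hA.mem_of_insert (left_mem_arc a k) h (insert_left_arc a k ▸ isArc_arc _ _)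
  · exact hA.mem_of_insert (left_mem_arc a k) h (insert_right_arc a k ▸ isArc_arc _ _)

lemma eq_right_of_mem_arc {σ : Config N} {a x : ZMod N} {k : ℕ} (hc : ConstOn σ (arc a k))
    (hx : x ∈ arc a k) (hwall : σ x ≠ σ (x + 1)) : x = a + k := by
  by_contra hne
  exact hwall (hc x hx _ (add_one_mem_arc hx hne))

lemma le_of_add_eq_of_constOn_arc {σ : Config N} {a a' : ZMod N} {k k' : ℕ}
    (hc' : ConstOn σ (arc a' k')) (hl : σ (a - 1) ≠ σ a) (he : a + k = a' + k') : k' ≤ k := by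
  by_contra! hlt
  have ha : a = a' + ((k' - k : ℕ) : ZMod N) := by
    rw [Nat.cast_sub hlt.le]; linear_combination he
  have ha1 : a - 1 = a' + ((k' - k - 1 : ℕ) : ZMod N) := by
    rw [Nat.cast_sub (by omega), Nat.cast_sub hlt.le]; linear_combination he
  exact hl (hc' _ (ha1 ▸ add_mem_arc (by omega)) _ (ha ▸ add_mem_arc (by omega)))

lemma arc_eq_of_add_eq {σ : Config N} {a a' : ZMod N} {k k' : ℕ}
    (hc : ConstOn σ (arc a k)) (hc' : ConstOn σ (arc a' k')) (hl : σ (a - 1) ≠ σ a)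
    (hl' : σ (a' - 1) ≠ σ a') (he : a + k = a' + k') : arc a k = arc a' k' := by
  obtain rfl : k = k' :=
    (le_of_add_eq_of_constOn_arc hc hl' he.symm).antisymm
      (le_of_add_eq_of_constOn_arc hc' hl he)
  rw [add_left_inj] at he
  rw [he]

lemma IsMaxMonoArc.eq_of_mem [NeZero N] {σ : Config N} (hσ : ∃ i j : ZMod N, σ i ≠ σ j)
    {A B : Finset (ZMod N)} (hA : IsMaxMonoArc σ A) (hB : IsMaxMonoArc σ B) {x : ZMod N}
    (hxA : x ∈ A) (hxB : x ∈ B) (hwall : σ x ≠ σ (x + 1)) : A = B := by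
  obtain ⟨a, k, rfl, hl, -⟩ := hA.exists_eq_arc hσ
  obtain ⟨b, l, rfl, hl', -⟩ := hB.exists_eq_arc hσ
  exact arc_eq_of_add_eq hA.2.1 hB.2.1 hl hl'
    ((eq_right_of_mem_arc hA.2.1 hxA hwall).symm.trans (eq_right_of_mem_arc hB.2.1 hxB hwall))

end MaxMonoArc

section Walls

variable {N : ℕ} [NeZero N]

def walls (σ : Config N) (b : Bool) : Finset (ZMod N) :=
  Finset.univ.filter fun e => σ e = b ∧ σ e ≠ σ (e + 1)

lemma mem_walls {σ : Config N} {b : Bool} {e : ZMod N} :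
    e ∈ walls σ b ↔ σ e = b ∧ σ e ≠ σ (e + 1) := by
  simp [walls]

lemma numArcs_eq_card_walls {σ : Config N} (hσ : ∃ i j : ZMod N, σ i ≠ σ j) (b : Bool) :
    numArcs N σ b = (walls σ b).card := by
  classical
  refine le_antisymm
    (Finset.card_le_card_of_forall_subsingleton (fun A e => e ∈ A) ?_ ?_)
    (Finset.card_le_card_of_forall_subsingleton' (fun A e => e ∈ A) ?_ ?_)
  · simp only [Finset.mem_filter, Finset.mem_univ, true_and, mem_walls]
    rintro A ⟨hA, hAb⟩
    obtain ⟨a, k, rfl, -, hr⟩ := hA.exists_eq_arc hσ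
    have hak : σ (a + k) = σ a := hA.2.1 _ (right_mem_arc a k) _ (left_mem_arc a k)
    exact ⟨a + k, ⟨hAb _ (right_mem_arc a k), hak ▸ hr.symm⟩, right_mem_arc a k⟩
  · rintro e he A₁ ⟨hA₁, heA₁⟩ A₂ ⟨hA₂, heA₂⟩
    simp only [Finset.mem_filter, Finset.mem_univ, true_and] at hA₁ hA₂
    exact hA₁.1.eq_of_mem hσ hA₂.1 heA₁ heA₂ (mem_walls.1 he).2
  · intro e he
    obtain ⟨heb, hwall⟩ := mem_walls.1 he
    have he0 : arc e 0 = {e} := by simp [arc]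
    obtain ⟨A, hA, heA⟩ := exists_isMaxMonoArc_superset (σ := σ) (isArc_arc e 0)
      (he0 ▸ fun i hi j hj => by rw [Finset.mem_singleton.1 hi, Finset.mem_singleton.1 hj])
    refine ⟨A, ?_, heA (left_mem_arc e 0)⟩
    simp only [Finset.mem_filter, Finset.mem_univ, true_and]
    exact ⟨hA, fun i hi => (hA.2.1 i hi e (heA (left_mem_arc e 0))).trans heb⟩
  · rintro A hA e₁ ⟨he₁, heA₁⟩ e₂ ⟨he₂, heA₂⟩
    simp only [Finset.mem_filter, Finset.mem_univ, true_and] at hA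
    rw [mem_walls] at he₁ he₂
    obtain ⟨a, k, rfl, -⟩ := hA.1.exists_eq_arc hσ
    exact (eq_right_of_mem_arc hA.1.2.1 heA₁ he₁.2).trans
      (eq_right_of_mem_arc hA.1.2.1 heA₂ he₂.2).symm

lemma card_walls_true_eq_card_walls_false (σ : Config N) :
    (walls σ true).card = (walls σ false).card := by
  have hshift : ∑ e, ((σ (e + 1)).toNat : ℤ) = ∑ e, ((σ e).toNat : ℤ) :=
    Equiv.sum_comp (Equiv.addRight (1 : ZMod N)) fun e => ((σ e).toNat : ℤ)
  have hwall : ∀ e, ((σ e).toNat : ℤ) - (σ (e + 1)).toNat =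
      (if σ e = true ∧ σ e ≠ σ (e + 1) then 1 else 0) -
        (if σ e = false ∧ σ e ≠ σ (e + 1) then 1 else 0) := by
    intro e
    cases σ e <;> cases σ (e + 1) <;> rfl
  rw [← Int.natCast_inj, walls, walls, Finset.natCast_card_filter, Finset.natCast_card_filter,
    ← sub_eq_zero, ← Finset.sum_sub_distrib]
  simp_rw [← hwall]
  rw [Finset.sum_sub_distrib, hshift, sub_self]

lemma eq_of_walls_eq_empty {σ : Config N} (h : ∀ b, walls σ b = ∅) (i j : ZMod N) :
    σ i = σ j := by
  have hstep : ∀ x, σ (x + 1) = σ x := fun x => by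
    by_contra hne
    exact Finset.notMem_empty x (h (σ x) ▸ mem_walls.2 ⟨rfl, Ne.symm hne⟩)
  have hadd : ∀ n : ℕ, σ (i + n) = σ i := by
    intro n
    induction n with
    | zero => simp
    | succ n ih => rw [Nat.cast_succ, ← add_assoc, hstep, ih]
  simpa using (hadd (j - i).val).symm

section Flip

variable {σ : Config N} {a : ZMod N} {k : ℕ}

lemma walls_flipSpins (hc : ConstOn σ (arc a k)) (hl : σ (a - 1) ≠ σ a)
    (hr : σ (a + k + 1) ≠ σ a) (b : Bool) :
    walls (flipSpins (arc a k) σ) b = walls σ b \ {a - 1, a + k} := by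
  ext i
  simp only [mem_walls, Finset.mem_sdiff, Finset.mem_insert, Finset.mem_singleton]
  have hak : σ (a + k) = σ a := hc _ (right_mem_arc a k) _ (left_mem_arc a k)
  by_cases hi : i ∈ arc a k <;> by_cases hi1 : i + 1 ∈ arc a k
  · simp [flipSpins, hi, hi1, hc i hi _ hi1]
  · obtain rfl : i = a + k := by_contra fun h => hi1 (add_one_mem_arc hi h)
    simp [flipSpins, hi, hi1, hak, Ne.symm hr]
  · obtain rfl : i = a - 1 := by_contra fun h => hi (mem_arc_of_add_one_mem hi1 h)
    simp [flipSpins, hi, left_mem_arc, hl]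
  · have h1 : i ≠ a - 1 := fun h => hi1 (by simpa [h] using left_mem_arc a k)
    have h2 : i ≠ a + k := fun h => hi (h ▸ right_mem_arc a k)
    simp [flipSpins, hi, hi1, h1, h2]

lemma card_walls_flipSpins (hc : ConstOn σ (arc a k)) (hl : σ (a - 1) ≠ σ a)
    (hr : σ (a + k + 1) ≠ σ a) (b : Bool) :
    (walls (flipSpins (arc a k) σ) b).card = (walls σ b).card - 1 := by
  have hak : σ (a + k) = σ a := hc _ (right_mem_arc a k) _ (left_mem_arc a k)
  rw [walls_flipSpins hc hl hr, Finset.card_sdiff]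
  congr
  obtain rfl | rfl : b = σ a ∨ b = !σ a := by cases b <;> cases σ a <;> simp
  · rw [Finset.insert_inter_of_notMem (by simp [mem_walls, hl]),
      Finset.singleton_inter_of_mem (by simp [mem_walls, hak, Ne.symm hr]),
      Finset.card_singleton]
  · rw [Finset.insert_inter_of_mem (by simp [mem_walls, Bool.eq_not.2 hl]),
      Finset.singleton_inter_of_notMem (by simp [mem_walls, hak])]
    rfl

end Flip

end Walls

theorem flip_maxMonoArc_general (N : ℕ) [NeZero N] (σ : Config N)
    (hσ : ∃ i j : ZMod N, σ i ≠ σ j) (c : ℕ) (hc : numArcs N σ true = c)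
    (A : Finset (ZMod N)) (hA : IsMaxMonoArc σ A) :
    (c = 1 → ∀ i j : ZMod N, flipSpins A σ i = flipSpins A σ j) ∧
    (2 ≤ c →
      (∃ i j : ZMod N, flipSpins A σ i ≠ flipSpins A σ j) ∧
      numArcs N (flipSpins A σ) true = c - 1 ∧
      numArcs N (flipSpins A σ) false = c - 1) := by
  obtain ⟨a, k, rfl, hl, hr⟩ := hA.exists_eq_arc hσ
  have hcard : ∀ b, (walls (flipSpins (arc a k) σ) b).card = c - 1 := by
    intro b
    rw [card_walls_flipSpins hA.2.1 hl hr, ← hc, numArcs_eq_card_walls hσ]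
    cases b
    · rw [card_walls_true_eq_card_walls_false]
    · rfl
  refine ⟨fun hc1 => eq_of_walls_eq_empty fun b => Finset.card_eq_zero.1 (by rw [hcard, hc1]),
    fun hc2 => ?_⟩
  obtain ⟨e, he⟩ : (walls (flipSpins (arc a k) σ) true).Nonempty :=
    Finset.card_pos.1 (by rw [hcard]; omega)
  have hflip : ∃ i j : ZMod N, flipSpins (arc a k) σ i ≠ flipSpins (arc a k) σ j :=
    ⟨e, e + 1, (mem_walls.1 he).2⟩
  exact ⟨hflip, by rw [numArcs_eq_card_walls hflip, hcard],
    by rw [numArcs_eq_card_walls hflip, hcard]⟩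

/-- **Flipping a maximal monochromatic arc.**  Let `σ` be non-constant with
exactly `c` maximal monochromatic arcs of value `+1`.  If `A` is any maximal
monochromatic arc of `σ`, then: if `c = 1` the flipped configuration `σ^A` is
constant, and if `c ≥ 2` it is non-constant with exactly `c − 1` maximal
monochromatic arcs of value `+1` (and `c − 1` of value `−1`). -/
theorem flip_maxMonoArc (N : ℕ) (hN : 3 ≤ N) [NeZero N] (σ : Config N)
    (hσ : ∃ i j : ZMod N, σ i ≠ σ j) (c : ℕ) (hc : numArcs N σ true = c)
    (A : Finset (ZMod N)) (hA : IsMaxMonoArc σ A) :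
    (c = 1 → ∀ i j : ZMod N, flipSpins A σ i = flipSpins A σ j) ∧
    (2 ≤ c →
      (∃ i j : ZMod N, flipSpins A σ i ≠ flipSpins A σ j) ∧
      numArcs N (flipSpins A σ) true = c - 1 ∧
      numArcs N (flipSpins A σ) false = c - 1) :=
  flip_maxMonoArc_general N σ hσ c hc A hA
end
end

section
/- Consider the Wolff dynamics at the critical point Ĵ = +∞, given by the transition matrix P_∞. Then P_∞(+𝟏, −𝟏) = 1 and P_∞(−𝟏, +𝟏) = 1, so once the chain is in {−𝟏, +𝟏} it alternates deterministically between the two constant configurations; and for every non-constant σ ∈ Ω with exactly c maximal monochromatic arcs of value +1, the c-step transition probability from σ into {−𝟏, +𝟏} equals 1, that is, (P_∞^c)(σ, −𝟏) + (P_∞^c)(σ, +𝟏) = 1. In particular, from any initial configuration the dynamics reaches the set {−𝟏, +𝟏} in finitely many steps with probability 1. -/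
open Real Finset

noncomputable section

open scoped Classical in
/-- The Wolff transition matrix at the critical point `Ĵ = +∞`:
`P_∞(σ,η) = #A/N` if `η = σ^A` for a maximal monochromatic arc `A` of `σ`,
and `P_∞(σ,η) = 0` otherwise. -/
noncomputable def Pinf (N : ℕ) [NeZero N] : Matrix (Config N) (Config N) ℝ :=
  fun σ η =>
    if IsMaxMonoArc σ (diffSet σ η) then ((diffSet σ η).card : ℝ) / N else 0

set_option linter.unusedSectionVars false
section Aux
variable {N : ℕ} [NeZero N]

open scoped Classical

lemma natCast_inj_lt {t t' : ℕ} (ht : t < N) (ht' : t' < N)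
    (h : (t : ZMod N) = (t' : ZMod N)) : t = t' := by
  have h1 := ZMod.val_cast_of_lt ht
  have h2 := ZMod.val_cast_of_lt ht'
  rw [h] at h1; omega

lemma natCast_sub_one (hN : 1 ≤ N) : ((N - 1 : ℕ) : ZMod N) = -1 := by
  push_cast [Nat.cast_sub hN]
  simp

lemma flip_diffSet (σ η : Config N) : flipSpins (diffSet σ η) σ = η := by
  funext i
  simp only [flipSpins, diffSet, Finset.mem_filter, Finset.mem_univ, true_and]
  by_cases h : σ i = η i <;> simp [h] <;> cases hσ : σ i <;> cases hη : η i <;>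
    simp_all

lemma diffSet_flip (A : Finset (ZMod N)) (σ : Config N) :
    diffSet σ (flipSpins A σ) = A := by
  ext i
  simp only [diffSet, flipSpins, Finset.mem_filter, Finset.mem_univ, true_and]
  by_cases h : i ∈ A <;> simp [h]

/-- Sites `a` where an arc of `σ` starts. -/
def bdry (σ : Config N) : Finset (ZMod N) :=
  Finset.univ.filter fun a => σ (a - 1) ≠ σ a

/-- Sites where a `+1` (true) arc of `σ` starts. -/
def tstarts (σ : Config N) : Finset (ZMod N) :=
  Finset.univ.filter fun a => σ (a - 1) = false ∧ σ a = true

lemma exists_run (σ : Config N) {a : ZMod N} (ha : σ (a - 1) ≠ σ a) :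
    ∃ t : ℕ, σ (a + ((t + 1 : ℕ) : ZMod N)) ≠ σ a := by
  have hN : 2 ≤ N := by
    by_contra h
    interval_cases N
    · exact (NeZero.ne 0) rfl
    · exact ha (by congr 1; exact Subsingleton.elim _ _)
  refine ⟨N - 2, ?_⟩
  have : ((N - 2 + 1 : ℕ) : ZMod N) = -1 := by
    have : N - 2 + 1 = N - 1 := by omega
    rw [this, natCast_sub_one (by omega)]
  rw [this]
  rw [show a + -1 = a - 1 by ring]; exact ha

/-- The length minus one of the monochromatic run of `σ` starting at `a`. -/
noncomputable def runK (σ : Config N) (a : ZMod N) : ℕ :=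
  if h : ∃ t : ℕ, σ (a + ((t + 1 : ℕ) : ZMod N)) ≠ σ a then Nat.find h else 0

/-- The monochromatic run of `σ` starting at `a`, as a finset. -/
noncomputable def run (σ : Config N) (a : ZMod N) : Finset (ZMod N) :=
  Finset.image (fun t : ℕ => a + (t : ZMod N)) (Finset.range (runK σ a + 1))

lemma runK_spec (σ : Config N) {a : ZMod N} (ha : σ (a - 1) ≠ σ a) :
    σ (a + ((runK σ a + 1 : ℕ) : ZMod N)) ≠ σ a ∧
      (∀ t ≤ runK σ a, σ (a + (t : ZMod N)) = σ a) ∧ runK σ a + 1 < N := by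
  have hex := exists_run σ ha
  have hN : 2 ≤ N := by
    by_contra h
    interval_cases N
    · exact (NeZero.ne 0) rfl
    · exact ha (by congr 1; exact Subsingleton.elim _ _)
  rw [runK, dif_pos hex]
  refine ⟨Nat.find_spec hex, ?_, ?_⟩
  · intro t ht
    rcases Nat.eq_zero_or_pos t with rfl | hpos
    · simp
    · have := Nat.find_min hex (m := t - 1) (by omega)
      simp only [not_not] at this
      have ht1 : t - 1 + 1 = t := by omega
      rwa [ht1] at this
  · -- Nat.find ≤ N - 2
    have : Nat.find hex ≤ N - 2 := by
      apply Nat.find_le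
      have : ((N - 2 + 1 : ℕ) : ZMod N) = -1 := by
        have h2 : N - 2 + 1 = N - 1 := by omega
        rw [h2, natCast_sub_one (by omega)]
      rw [this]
      rw [show a + -1 = a - 1 by ring]; exact ha
    omega

lemma mem_run {σ : Config N} {a j : ZMod N} :
    j ∈ run σ a ↔ ∃ t : ℕ, t ≤ runK σ a ∧ j = a + (t : ZMod N) := by
  simp [run, Finset.mem_image, Nat.lt_succ_iff, eq_comm, and_comm]

lemma mem_run_self (σ : Config N) (a : ZMod N) : a ∈ run σ a :=
  mem_run.2 ⟨0, Nat.zero_le _, by simp⟩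

end Aux
section Aux2
set_option linter.unusedSectionVars false
variable {N : ℕ} [NeZero N]
open scoped Classical

lemma natCast_succ_pred {t : ℕ} (h : 1 ≤ t) :
    ((t : ℕ) : ZMod N) = ((t - 1 : ℕ) : ZMod N) + 1 := by
  conv_lhs => rw [show t = (t - 1) + 1 by omega]
  push_cast
  ring

lemma arc_eq_univ_s4 {a : ZMod N} {k : ℕ} (hk : N ≤ k + 1) :
    Finset.image (fun t : ℕ => a + (t : ZMod N)) (Finset.range (k + 1)) =
      Finset.univ := by
  apply Finset.eq_univ_of_forall
  intro x
  simp only [Finset.mem_image, Finset.mem_range]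
  exact ⟨(x - a).val, lt_of_lt_of_le (ZMod.val_lt _) hk,
    by rw [ZMod.natCast_rightInverse (x - a)]; ring⟩

lemma val_cast_mem_range {a j : ZMod N} {k : ℕ} (hk : k + 1 ≤ N)
    (h : j ∈ Finset.image (fun t : ℕ => a + (t : ZMod N)) (Finset.range (k + 1))) :
    ∃ t : ℕ, t ≤ k ∧ j = a + (t : ZMod N) := by
  simp only [Finset.mem_image, Finset.mem_range, Nat.lt_succ_iff] at h
  obtain ⟨t, ht, rfl⟩ := h
  exact ⟨t, ht, rfl⟩

lemma run_isMaxMonoArc (σ : Config N) {a : ZMod N} (ha : σ (a - 1) ≠ σ a) :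
    IsMaxMonoArc σ (run σ a) := by
  obtain ⟨hend, hconst, hlt⟩ := runK_spec σ ha
  refine ⟨⟨a, runK σ a, rfl⟩, ?_, ?_⟩
  · intro i hi j hj
    obtain ⟨t, ht, rfl⟩ := mem_run.1 hi
    obtain ⟨s, hs, rfl⟩ := mem_run.1 hj
    rw [hconst t ht, hconst s hs]
  · rintro B ⟨b, m, rfl⟩ hB hsub
    -- B is an arc containing run σ a, must equal it
    have hconstB := hB
    -- first: m + 1 < N, else B = univ containing a-1 and a
    have hm : m + 1 < N := by
      by_contra hm
      rw [arc_eq_univ_s4 (by omega)] at hB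
      exact ha (hB _ (Finset.mem_univ _) _ (Finset.mem_univ _))
    -- a ∈ B
    have haB : a ∈ Finset.image (fun t : ℕ => b + (t : ZMod N)) (Finset.range (m + 1)) :=
      hsub (mem_run_self σ a)
    obtain ⟨s, hs, has⟩ := val_cast_mem_range (by omega) haB
    -- a - 1 ∉ B since σ (a-1) ≠ σ a and B is const
    have hnm : a - 1 ∉ Finset.image (fun t : ℕ => b + (t : ZMod N)) (Finset.range (m + 1)) := by
      intro hmem
      exact ha (hB _ hmem _ haB)
    -- s = 0, i.e. a = b
    have hs0 : s = 0 := by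
      by_contra hs0
      apply hnm
      refine Finset.mem_image.2 ⟨s - 1, Finset.mem_range.2 (by omega), ?_⟩
      rw [has]
      conv_rhs => rw [natCast_succ_pred (show 1 ≤ s by omega)]
      ring
    rw [hs0, Nat.cast_zero, add_zero] at has
    subst has
    -- m ≤ runK: else a + (runK+1) ∈ B but has different spin
    have hm_le : m ≤ runK σ a := by
      by_contra hgt
      push_neg at hgt
      have hmemB : a + ((runK σ a + 1 : ℕ) : ZMod N) ∈
          Finset.image (fun t : ℕ => a + (t : ZMod N)) (Finset.range (m + 1)) :=
        Finset.mem_image.2 ⟨runK σ a + 1, Finset.mem_range.2 (by omega), rfl⟩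
      exact hend (hB _ hmemB _ haB)
    -- runK ≤ m : else a + (m+1) ∈ run ⊆ B gives contradiction
    have hK_le : runK σ a ≤ m := by
      by_contra hgt
      push_neg at hgt
      have hmem : a + ((m + 1 : ℕ) : ZMod N) ∈ run σ a :=
        mem_run.2 ⟨m + 1, by omega, rfl⟩
      obtain ⟨t, htm, hte⟩ := val_cast_mem_range (by omega) (hsub hmem)
      have heq : ((m + 1 : ℕ) : ZMod N) = ((t : ℕ) : ZMod N) := add_left_cancel hte
      have : (m + 1 : ℕ) = t := natCast_inj_lt (by omega) (by omega) heq
      omega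
    have : m = runK σ a := le_antisymm hm_le hK_le
    rw [run, this]

lemma maxArc_eq_run {σ : Config N} {A : Finset (ZMod N)}
    (h : IsMaxMonoArc σ A) (hnc : ∃ i j : ZMod N, σ i ≠ σ j) :
    ∃ a : ZMod N, σ (a - 1) ≠ σ a ∧ A = run σ a := by
  obtain ⟨⟨a, k, rfl⟩, hconst, hmax⟩ := h
  have hknu : k + 1 < N := by
    by_contra hk
    rw [arc_eq_univ_s4 (by omega)] at hconst
    obtain ⟨i, j, hij⟩ := hnc
    exact hij (hconst _ (Finset.mem_univ _) _ (Finset.mem_univ _))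
  have haA : a ∈ Finset.image (fun t : ℕ => a + (t : ZMod N)) (Finset.range (k + 1)) :=
    Finset.mem_image.2 ⟨0, Finset.mem_range.2 (by omega), by simp⟩
  -- σ (a - 1) ≠ σ a
  have ha : σ (a - 1) ≠ σ a := by
    intro heq
    -- extend to the left
    have hBarc : IsArc (Finset.image (fun t : ℕ => (a - 1) + (t : ZMod N))
        (Finset.range (k + 1 + 1))) := ⟨a - 1, k + 1, rfl⟩
    have hBconst : ConstOn σ (Finset.image (fun t : ℕ => (a - 1) + (t : ZMod N))
        (Finset.range (k + 1 + 1))) := by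
      have key : ∀ i ∈ Finset.image (fun t : ℕ => (a - 1) + (t : ZMod N))
          (Finset.range (k + 1 + 1)), σ i = σ a := by
        intro i hi
        simp only [Finset.mem_image, Finset.mem_range, Nat.lt_succ_iff] at hi
        obtain ⟨t, ht, rfl⟩ := hi
        rcases Nat.eq_zero_or_pos t with rfl | hpos
        · simpa using heq
        · have : a - 1 + (t : ZMod N) = a + ((t - 1 : ℕ) : ZMod N) := by
            rw [natCast_succ_pred (by omega)]; ring
          rw [this]
          exact hconst _ (Finset.mem_image.2 ⟨t - 1, Finset.mem_range.2 (by omega), rfl⟩)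
            _ haA
      intro i hi j hj; rw [key i hi, key j hj]
    have hsub : Finset.image (fun t : ℕ => a + (t : ZMod N)) (Finset.range (k + 1)) ⊆
        Finset.image (fun t : ℕ => (a - 1) + (t : ZMod N)) (Finset.range (k + 1 + 1)) := by
      intro x hx
      simp only [Finset.mem_image, Finset.mem_range] at hx ⊢
      obtain ⟨t, ht, rfl⟩ := hx
      exact ⟨t + 1, by omega, by push_cast; ring⟩
    have := hmax _ hBarc hBconst hsub
    -- then a - 1 ∈ A, contradiction
    have hm : a - 1 ∈ Finset.image (fun t : ℕ => a + (t : ZMod N)) (Finset.range (k + 1)) := by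
      rw [this]
      exact Finset.mem_image.2 ⟨0, Finset.mem_range.2 (by omega), by simp⟩
    obtain ⟨t, ht, hte⟩ := val_cast_mem_range (by omega) hm
    have h1 : a + ((t : ℕ) : ZMod N) = a + ((N - 1 : ℕ) : ZMod N) := by
      rw [natCast_sub_one (by omega), ← hte]; ring
    have := natCast_inj_lt (show t < N by omega) (by omega) (add_left_cancel h1)
    omega
  -- σ (a + (k+1)) ≠ σ a
  have hend : σ (a + ((k + 1 : ℕ) : ZMod N)) ≠ σ a := by
    intro heq
    have hBarc : IsArc (Finset.image (fun t : ℕ => a + (t : ZMod N))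
        (Finset.range (k + 1 + 1))) := ⟨a, k + 1, rfl⟩
    have hBconst : ConstOn σ (Finset.image (fun t : ℕ => a + (t : ZMod N))
        (Finset.range (k + 1 + 1))) := by
      have key : ∀ i ∈ Finset.image (fun t : ℕ => a + (t : ZMod N))
          (Finset.range (k + 1 + 1)), σ i = σ a := by
        intro i hi
        simp only [Finset.mem_image, Finset.mem_range, Nat.lt_succ_iff] at hi
        obtain ⟨t, ht, rfl⟩ := hi
        rcases Nat.lt_or_ge t (k + 1) with hlt | hge
        · exact hconst _ (Finset.mem_image.2 ⟨t, Finset.mem_range.2 hlt, rfl⟩) _ haA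
        · have : t = k + 1 := by omega
          rw [this]; exact heq
      intro i hi j hj; rw [key i hi, key j hj]
    have hsub : Finset.image (fun t : ℕ => a + (t : ZMod N)) (Finset.range (k + 1)) ⊆
        Finset.image (fun t : ℕ => a + (t : ZMod N)) (Finset.range (k + 1 + 1)) :=
      Finset.image_subset_image (Finset.range_subset_range.2 (by omega))
    have := hmax _ hBarc hBconst hsub
    have hm : a + ((k + 1 : ℕ) : ZMod N) ∈
        Finset.image (fun t : ℕ => a + (t : ZMod N)) (Finset.range (k + 1)) := by
      rw [this]
      exact Finset.mem_image.2 ⟨k + 1, Finset.mem_range.2 (by omega), rfl⟩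
    obtain ⟨t, ht, hte⟩ := val_cast_mem_range (by omega) hm
    have := natCast_inj_lt (show k + 1 < N by omega) (show t < N by omega)
      (add_left_cancel hte)
    omega
  -- now k = runK σ a
  refine ⟨a, ha, ?_⟩
  have hex := exists_run σ ha
  have hKdef : runK σ a = Nat.find hex := by rw [runK, dif_pos hex]
  have hfind_le : Nat.find hex ≤ k := Nat.find_le hend
  have hconst' : ∀ t ≤ k, σ (a + (t : ZMod N)) = σ a := fun t ht =>
    hconst _ (Finset.mem_image.2 ⟨t, Finset.mem_range.2 (by omega), rfl⟩) _ haA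
  have hle_find : k ≤ Nat.find hex := by
    by_contra hlt
    push_neg at hlt
    exact Nat.find_spec hex (hconst' _ (by omega))
  rw [run, hKdef, ← le_antisymm hfind_le hle_find]

end Aux2
section Aux3
set_option linter.unusedSectionVars false
variable {N : ℕ} [NeZero N]
open scoped Classical

lemma start_unique_aux {σ : Config N} {a a' : ZMod N}
    (ha : σ (a - 1) ≠ σ a) (ha' : σ (a' - 1) ≠ σ a') {d : ℕ}
    (hd : d ≤ runK σ a') (heq : a = a' + (d : ZMod N)) : a = a' := by
  rcases Nat.eq_zero_or_pos d with rfl | hpos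
  · simpa using heq
  obtain ⟨_, hconst', _⟩ := runK_spec σ ha'
  have h1 : σ a = σ a' := heq ▸ hconst' d hd
  have h2 : σ (a - 1) = σ a' := by
    have : a - 1 = a' + ((d - 1 : ℕ) : ZMod N) := by
      rw [heq, natCast_succ_pred (show 1 ≤ d from hpos)]; ring
    rw [this]; exact hconst' (d - 1) (by omega)
  exact absurd (h2.trans h1.symm) ha

lemma start_unique {σ : Config N} {a a' j : ZMod N}
    (ha : σ (a - 1) ≠ σ a) (ha' : σ (a' - 1) ≠ σ a')
    (hj : j ∈ run σ a) (hj' : j ∈ run σ a') : a = a' := by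
  obtain ⟨t, ht, rfl⟩ := mem_run.1 hj
  obtain ⟨t', ht', he⟩ := mem_run.1 hj'
  rcases le_total t t' with hle | hle
  · have h2 : ((t' : ℕ) : ZMod N) = ((t' - t : ℕ) : ZMod N) + (t : ZMod N) := by
      push_cast [Nat.cast_sub hle]; ring
    rw [h2, ← add_assoc] at he
    exact start_unique_aux ha ha' (show t' - t ≤ runK σ a' by omega) (add_right_cancel he)
  · have h2 : ((t : ℕ) : ZMod N) = ((t - t' : ℕ) : ZMod N) + (t' : ZMod N) := by
      push_cast [Nat.cast_sub hle]; ring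
    rw [h2, ← add_assoc] at he
    exact (start_unique_aux ha' ha (show t - t' ≤ runK σ a by omega)
      (add_right_cancel he.symm)).symm

lemma cover {σ : Config N} (hnc : ∃ i j : ZMod N, σ i ≠ σ j) (j : ZMod N) :
    ∃ a : ZMod N, σ (a - 1) ≠ σ a ∧ j ∈ run σ a := by
  have hex : ∃ s : ℕ, σ (j - ((s + 1 : ℕ) : ZMod N)) ≠ σ j := by
    obtain ⟨i1, i2, h12⟩ := hnc
    have : ∃ i, σ i ≠ σ j := by
      by_cases h1 : σ i1 = σ j
      · exact ⟨i2, fun h => h12 (h1.trans h.symm)⟩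
      · exact ⟨i1, h1⟩
    obtain ⟨i, hi⟩ := this
    have hij : i ≠ j := fun h => hi (h ▸ rfl)
    refine ⟨(j - i).val - 1, ?_⟩
    have hval : 1 ≤ (j - i).val := by
      rcases Nat.eq_zero_or_pos (j - i).val with h0 | h
      · exact absurd (sub_eq_zero.1 ((ZMod.val_eq_zero _).1 h0)).symm hij
      · exact h
    have : ((j - i).val - 1 + 1 : ℕ) = (j - i).val := by omega
    rw [this, ZMod.natCast_rightInverse (j - i)]
    simpa using hi
  set s0 := Nat.find hex with hs0
  have hspec := Nat.find_spec hex
  have hmin : ∀ t < s0, σ (j - ((t + 1 : ℕ) : ZMod N)) = σ j := fun t ht => by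
    have := Nat.find_min hex ht; simpa using this
  set a := j - ((s0 : ℕ) : ZMod N) with hadef
  have hsj : σ a = σ j := by
    rcases Nat.eq_zero_or_pos s0 with h0 | hpos
    · rw [hadef, h0]; simp
    · have := hmin (s0 - 1) (by omega)
      rwa [show s0 - 1 + 1 = s0 by omega] at this
  have ha : σ (a - 1) ≠ σ a := by
    have : a - 1 = j - ((s0 + 1 : ℕ) : ZMod N) := by rw [hadef]; push_cast; ring
    rw [this, hsj]; exact hspec
  refine ⟨a, ha, ?_⟩
  rw [mem_run]
  refine ⟨s0, ?_, by rw [hadef]; ring⟩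
  by_contra hgt
  push_neg at hgt
  obtain ⟨hend, hconst, hlt⟩ := runK_spec σ ha
  set K := runK σ a
  have hKs : K + 1 ≤ s0 := hgt
  -- a + (K+1) = j - (s0 - K - 1)
  rcases Nat.lt_or_ge (K + 1) s0 with hlt2 | hge
  · have harith : a + ((K + 1 : ℕ) : ZMod N) = j - ((s0 - K - 2 + 1 : ℕ) : ZMod N) := by
      have h2 : ((s0 : ℕ) : ZMod N) = ((K + 1 : ℕ) : ZMod N) + ((s0 - K - 2 + 1 : ℕ) : ZMod N) := by
        rw [← Nat.cast_add]; congr 1; omega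
      rw [hadef, h2]; ring
    have := hmin (s0 - K - 2) (by omega)
    rw [← harith] at this
    exact hend (this.trans hsj.symm)
  · have hs0K : s0 = K + 1 := by omega
    have : a + ((K + 1 : ℕ) : ZMod N) = j := by rw [hadef, hs0K]; ring
    rw [this] at hend
    exact hend hsj.symm

lemma tstarts_nonempty {σ : Config N} (hnc : ∃ i j : ZMod N, σ i ≠ σ j) :
    (tstarts σ).Nonempty := by
  -- there is a true site and a false site
  obtain ⟨i1, i2, h12⟩ := hnc
  have hft : ∃ u v : ZMod N, σ u = false ∧ σ v = true := by
    cases h1 : σ i1 <;> cases h2 : σ i2 <;> first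
      | exact ⟨i1, i2, h1, h2⟩ | exact ⟨i2, i1, h2, h1⟩ | (exfalso; rw [h1, h2] at h12; exact h12 rfl)
  obtain ⟨u, v, hu, hv⟩ := hft
  -- find the boundary of the run of trues containing v
  obtain ⟨a, ha, hmem⟩ := cover (show ∃ i j : ZMod N, σ i ≠ σ j from ⟨u, v, by rw [hu, hv]; simp⟩) v
  obtain ⟨t, ht, rfl⟩ := mem_run.1 hmem
  obtain ⟨_, hconst, _⟩ := runK_spec σ ha
  have hav : σ a = true := by rw [← hconst t ht]; exact hv
  refine ⟨a, Finset.mem_filter.2 ⟨Finset.mem_univ _, ?_, hav⟩⟩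
  rw [hav] at ha
  cases h : σ (a - 1)
  · rfl
  · exact absurd h ha

lemma const_of_tstarts_empty {σ : Config N} (h : ¬ (tstarts σ).Nonempty) :
    (σ = fun _ => false) ∨ (σ = fun _ => true) := by
  by_cases hc : ∀ i, σ i = σ 0
  · cases h0 : σ 0
    · exact Or.inl (funext fun i => (hc i).trans h0)
    · exact Or.inr (funext fun i => (hc i).trans h0)
  · push_neg at hc
    obtain ⟨i, hi⟩ := hc
    exact absurd (tstarts_nonempty ⟨i, 0, hi⟩) h

/-- The runs of a non-constant configuration cover the cycle. -/
lemma bdry_biUnion {σ : Config N} (hnc : ∃ i j : ZMod N, σ i ≠ σ j) :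
    (bdry σ).biUnion (run σ) = Finset.univ := by
  apply Finset.eq_univ_of_forall
  intro j
  obtain ⟨a, ha, hj⟩ := cover hnc j
  exact Finset.mem_biUnion.2 ⟨a, Finset.mem_filter.2 ⟨Finset.mem_univ _, ha⟩, hj⟩

lemma run_disjoint {σ : Config N} {a a' : ZMod N} (ha : a ∈ bdry σ) (ha' : a' ∈ bdry σ)
    (hne : a ≠ a') : Disjoint (run σ a) (run σ a') := by
  rw [Finset.disjoint_left]
  intro j hj hj'
  exact hne (start_unique (Finset.mem_filter.1 ha).2 (Finset.mem_filter.1 ha').2 hj hj')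

end Aux3
section Aux4
set_option linter.unusedSectionVars false
variable {N : ℕ} [NeZero N]
open scoped Classical

lemma isMaxMonoArc_univ_of_const {σ : Config N} (hc : ∀ i j : ZMod N, σ i = σ j) :
    IsMaxMonoArc σ (Finset.univ : Finset (ZMod N)) := by
  have hN1 : 1 ≤ N := Nat.one_le_iff_ne_zero.2 (NeZero.ne N)
  refine ⟨⟨0, N - 1, ?_⟩, fun i _ j _ => hc i j, fun B _ _ hsub =>
    (Finset.univ_subset_iff.1 hsub).symm⟩
  rw [arc_eq_univ_s4 (by omega)]

lemma maxArc_const {σ : Config N} (hc : ∀ i j : ZMod N, σ i = σ j)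
    {A : Finset (ZMod N)} (h : IsMaxMonoArc σ A) : A = Finset.univ := by
  have hN1 : 1 ≤ N := Nat.one_le_iff_ne_zero.2 (NeZero.ne N)
  refine h.2.2 Finset.univ ⟨0, N - 1, ?_⟩ (fun i _ j _ => hc i j) (Finset.subset_univ A)
  rw [arc_eq_univ_s4 (by omega)]

lemma sum_pinf_eq (σ : Config N) :
    ∑ η : Config N, Pinf N σ η =
      ∑ A ∈ Finset.univ.filter (fun A => IsMaxMonoArc σ A), ((A.card : ℝ) / N) := by
  have hinj : ∀ A ∈ Finset.univ.filter (fun A => IsMaxMonoArc σ A),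
      ∀ A' ∈ Finset.univ.filter (fun A => IsMaxMonoArc σ A),
      flipSpins A σ = flipSpins A' σ → A = A' := by
    intro A _ A' _ h
    have := congrArg (diffSet σ) h
    rwa [diffSet_flip, diffSet_flip] at this
  rw [← Finset.sum_subset
    (Finset.subset_univ ((Finset.univ.filter (fun A => IsMaxMonoArc σ A)).image
      (fun A => flipSpins A σ)))
    (by
      intro η _ hη
      simp only [Pinf]
      rw [if_neg]
      intro hmax
      exact hη (Finset.mem_image.2 ⟨diffSet σ η, Finset.mem_filter.2
        ⟨Finset.mem_univ _, hmax⟩, flip_diffSet σ η⟩))]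
  rw [Finset.sum_image hinj]
  apply Finset.sum_congr rfl
  intro A hA
  simp only [Pinf, diffSet_flip]
  rw [if_pos (Finset.mem_filter.1 hA).2]

lemma card_univ_zmod : (Finset.univ : Finset (ZMod N)).card = N := by
  rw [Finset.card_univ, ZMod.card]

lemma row_sum (σ : Config N) : ∑ η : Config N, Pinf N σ η = 1 := by
  rw [sum_pinf_eq]
  by_cases hnc : ∃ i j : ZMod N, σ i ≠ σ j
  · -- non-constant: arcs are runs from boundary points
    have hfilt : Finset.univ.filter (fun A => IsMaxMonoArc σ A) =
        (bdry σ).image (run σ) := by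
      ext A
      simp only [Finset.mem_filter, Finset.mem_univ, true_and, Finset.mem_image]
      constructor
      · intro h
        obtain ⟨a, ha, rfl⟩ := maxArc_eq_run h hnc
        exact ⟨a, Finset.mem_filter.2 ⟨Finset.mem_univ _, ha⟩, rfl⟩
      · rintro ⟨a, ha, rfl⟩
        exact run_isMaxMonoArc σ (Finset.mem_filter.1 ha).2
    have hinj : ∀ a ∈ bdry σ, ∀ a' ∈ bdry σ, run σ a = run σ a' → a = a' := by
      intro a ha a' ha' h
      exact start_unique (Finset.mem_filter.1 ha).2 (Finset.mem_filter.1 ha').2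
        (mem_run_self σ a) (h ▸ mem_run_self σ a)
    rw [hfilt, Finset.sum_image hinj, ← Finset.sum_div]
    have : ∑ a ∈ bdry σ, ((run σ a).card : ℝ) =
        (((bdry σ).biUnion (run σ)).card : ℝ) := by
      rw [Finset.card_biUnion (fun a ha a' ha' hne => run_disjoint ha ha' hne)]
      push_cast
      rfl
    rw [this, bdry_biUnion hnc, card_univ_zmod, div_self]
    exact Nat.cast_ne_zero.2 (NeZero.ne N)
  · -- constant
    push_neg at hnc
    have hfilt : Finset.univ.filter (fun A => IsMaxMonoArc σ A) = {Finset.univ} := by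
      ext A
      simp only [Finset.mem_filter, Finset.mem_univ, true_and, Finset.mem_singleton]
      exact ⟨fun h => maxArc_const (fun i j => hnc i j) h,
        fun h => h ▸ isMaxMonoArc_univ_of_const (fun i j => hnc i j)⟩
    rw [hfilt, Finset.sum_singleton, card_univ_zmod, div_self]
    exact Nat.cast_ne_zero.2 (NeZero.ne N)

lemma numArcs_eq_card_tstarts {σ : Config N} (hnc : ∃ i j : ZMod N, σ i ≠ σ j) :
    numArcs N σ true = (tstarts σ).card := by
  rw [numArcs]
  symm
  refine Finset.card_bij (fun a _ => run σ a) ?_ ?_ ?_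
  · intro a ha
    obtain ⟨-, h1, h2⟩ := Finset.mem_filter.1 ha
    have hb : σ (a - 1) ≠ σ a := by rw [h1, h2]; simp
    refine Finset.mem_filter.2 ⟨Finset.mem_univ _, run_isMaxMonoArc σ hb, ?_⟩
    intro i hi
    obtain ⟨t, ht, rfl⟩ := mem_run.1 hi
    rw [(runK_spec σ hb).2.1 t ht, h2]
  · intro a ha a' ha' h
    obtain ⟨-, h1, h2⟩ := Finset.mem_filter.1 ha
    obtain ⟨-, h1', h2'⟩ := Finset.mem_filter.1 ha'
    have h' : run σ a = run σ a' := h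
    exact start_unique (by rw [h1, h2]; simp) (by rw [h1', h2']; simp)
      (mem_run_self σ a) (h' ▸ mem_run_self σ a)
  · intro A hA
    obtain ⟨-, hmax, hval⟩ := Finset.mem_filter.1 hA
    obtain ⟨a, ha, rfl⟩ := maxArc_eq_run hmax hnc
    have h2 : σ a = true := hval a (mem_run_self σ a)
    have h1 : σ (a - 1) = false := by
      cases h : σ (a - 1)
      · rfl
      · rw [h2] at ha; exact absurd h ha
    exact ⟨a, Finset.mem_filter.2 ⟨Finset.mem_univ _, h1, h2⟩, rfl⟩

end Aux4
section Aux5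
set_option linter.unusedSectionVars false
variable {N : ℕ} [NeZero N]
open scoped Classical

lemma tstarts_flip {σ : Config N} {a : ZMod N} (ha : σ (a - 1) ≠ σ a) :
    tstarts (flipSpins (run σ a) σ) =
      tstarts σ \ {a, a + ((runK σ a + 1 : ℕ) : ZMod N)} := by
  obtain ⟨hend, hconst, hlt⟩ := runK_spec σ ha
  set K := runK σ a with hK
  set e := a + ((K + 1 : ℕ) : ZMod N) with he
  set η := flipSpins (run σ a) σ with hη
  have hmem_run_val : ∀ j ∈ run σ a, σ j = σ a := fun j hj => by
    obtain ⟨t, ht, rfl⟩ := mem_run.1 hj; exact hconst t ht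
  have hη_in : ∀ j ∈ run σ a, η j = !(σ a) := fun j hj => by
    rw [hη]; simp only [flipSpins, if_pos hj]; rw [hmem_run_val j hj]
  have hη_out : ∀ j, j ∉ run σ a → η j = σ j := fun j hj => by
    rw [hη]; simp only [flipSpins, if_neg hj]
  have ham : a ∈ run σ a := mem_run_self σ a
  have ha1 : a - 1 ∉ run σ a := by
    intro hmem
    obtain ⟨t, ht, hte⟩ := mem_run.1 hmem
    have h1 : ((t : ℕ) : ZMod N) = ((N - 1 : ℕ) : ZMod N) := by
      rw [natCast_sub_one (by omega)]
      linear_combination -hte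
    have := natCast_inj_lt (show t < N by omega) (show N - 1 < N by omega) h1
    omega
  have hem : e ∉ run σ a := by
    intro hmem
    obtain ⟨t, ht, hte⟩ := mem_run.1 hmem
    have h1 : ((K + 1 : ℕ) : ZMod N) = ((t : ℕ) : ZMod N) := by
      rw [he] at hte; exact add_left_cancel hte
    have := natCast_inj_lt (show K + 1 < N from hlt) (show t < N by omega) h1
    omega
  have he1m : e - 1 ∈ run σ a := by
    refine mem_run.2 ⟨K, le_refl _, ?_⟩
    rw [he]; push_cast; ring
  have hσe : σ e = !(σ a) := by
    cases hsa : σ a <;> cases hse : σ e <;> simp_all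
  have hσa1 : σ (a - 1) = !(σ a) := by
    cases hsa : σ a <;> cases hse : σ (a - 1) <;> simp_all
  have hentry : ∀ i : ZMod N, i ∈ run σ a → i - 1 ∉ run σ a → i = a := by
    intro i hi hi1
    obtain ⟨t, ht, rfl⟩ := mem_run.1 hi
    rcases Nat.eq_zero_or_pos t with rfl | hpos
    · simp
    · exfalso
      apply hi1
      refine mem_run.2 ⟨t - 1, by omega, ?_⟩
      rw [natCast_succ_pred hpos]; ring
  have hexit : ∀ i : ZMod N, i - 1 ∈ run σ a → i ∉ run σ a → i = e := by
    intro i hi1 hi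
    obtain ⟨t, ht, hte⟩ := mem_run.1 hi1
    have hi_eq : i = a + ((t + 1 : ℕ) : ZMod N) := by
      have h0 : i = (i - 1) + 1 := by ring
      rw [h0, hte]; push_cast; ring
    rcases Nat.lt_or_ge t K with hlt2 | hge
    · exact absurd (mem_run.2 ⟨t + 1, by omega, hi_eq⟩) hi
    · have htK : t = K := by omega
      rw [hi_eq, htK, he]
  ext i
  simp only [tstarts, Finset.mem_filter, Finset.mem_univ, true_and, Finset.mem_sdiff,
    Finset.mem_insert, Finset.mem_singleton]
  by_cases hi1 : i - 1 ∈ run σ a <;> by_cases hi : i ∈ run σ a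
  · -- both in the run
    rw [hη_in _ hi1, hη_in _ hi]
    constructor
    · rintro ⟨h1, h2⟩; rw [h1] at h2; exact absurd h2 (by simp)
    · rintro ⟨⟨h1, h2⟩, -⟩
      exfalso
      have := (hmem_run_val _ hi1).trans (hmem_run_val _ hi).symm
      rw [h1, h2] at this
      exact absurd this (by simp)
  · -- exit point : i = e
    have hie := hexit i hi1 hi
    rw [hη_in _ hi1, hη_out _ hi, hie, hσe]
    constructor
    · rintro ⟨h1, h2⟩; rw [h1] at h2; exact absurd h2 (by simp)
    · rintro ⟨-, hne⟩; exact absurd (Or.inr rfl) hne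
  · -- entry point : i = a
    have hia := hentry i hi hi1
    rw [hη_out _ hi1, hη_in _ hi, hia, hσa1]
    constructor
    · rintro ⟨h1, h2⟩; rw [h1] at h2; exact absurd h2 (by simp)
    · rintro ⟨-, hne⟩; exact absurd (Or.inl rfl) hne
  · -- away from the run
    rw [hη_out _ hi1, hη_out _ hi]
    have hia : i ≠ a := fun h => hi (h ▸ ham)
    have hie : i ≠ e := fun h => hi1 (h ▸ he1m)
    simp [hia, hie]

lemma card_tstarts_flip {σ : Config N} {a : ZMod N} (ha : σ (a - 1) ≠ σ a) :
    (tstarts (flipSpins (run σ a) σ)).card + 1 = (tstarts σ).card := by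
  rw [tstarts_flip ha]
  obtain ⟨hend, hconst, hlt⟩ := runK_spec σ ha
  set K := runK σ a with hK
  set e := a + ((K + 1 : ℕ) : ZMod N) with he
  have hσe1 : σ (e - 1) = σ a := by
    have h0 : e - 1 = a + ((K : ℕ) : ZMod N) := by rw [he]; push_cast; ring
    rw [h0]; exact hconst K (le_refl _)
  have hinter : (tstarts σ ∩ {a, e}).card = 1 := by
    cases hsa : σ a
    · -- σ a = false : only e is a true-start among {a, e}
      have hae : tstarts σ ∩ {a, e} = {e} := by
        ext x
        simp only [tstarts, Finset.mem_inter, Finset.mem_filter, Finset.mem_univ, true_and,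
          Finset.mem_insert, Finset.mem_singleton]
        constructor
        · rintro ⟨⟨h1, h2⟩, hx | hx⟩
          · rw [hx, hsa] at h2; exact absurd h2 (by simp)
          · exact hx
        · intro hx
          refine ⟨⟨by rw [hx, hσe1, hsa], ?_⟩, Or.inr hx⟩
          rw [hx]
          cases hse : σ e
          · rw [hse, hsa] at hend; exact absurd rfl hend
          · rfl
      rw [hae, Finset.card_singleton]
    · -- σ a = true : only a is a true-start among {a, e}
      have hae : tstarts σ ∩ {a, e} = {a} := by
        ext x
        simp only [tstarts, Finset.mem_inter, Finset.mem_filter, Finset.mem_univ, true_and,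
          Finset.mem_insert, Finset.mem_singleton]
        constructor
        · rintro ⟨⟨h1, h2⟩, hx | hx⟩
          · exact hx
          · rw [hx, hσe1, hsa] at h1; exact absurd h1 (by simp)
        · intro hx
          refine ⟨⟨?_, by rw [hx]; exact hsa⟩, Or.inl hx⟩
          rw [hx]
          cases hsa1 : σ (a - 1)
          · rfl
          · rw [hsa1, hsa] at ha; exact absurd rfl ha
      rw [hae, Finset.card_singleton]
  have hmem : ∃ x, x ∈ tstarts σ ∩ {a, e} := by
    have := hinter
    rcases Finset.card_eq_one.1 this with ⟨x, hx⟩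
    exact ⟨x, hx ▸ Finset.mem_singleton_self x⟩
  have hpos : 1 ≤ (tstarts σ).card := by
    obtain ⟨x, hx⟩ := hmem
    exact Finset.card_pos.2 ⟨x, (Finset.mem_inter.1 hx).1⟩
  rw [← Finset.sdiff_inter_self_left, Finset.card_sdiff_of_subset Finset.inter_subset_left, hinter]
  omega

end Aux5
section Aux6
set_option linter.unusedSectionVars false
variable {N : ℕ} [NeZero N]
open scoped Classical

lemma const_ne_const : (fun _ => false : Config N) ≠ (fun _ => true) := by
  intro h
  have := congrFun h 0
  simp at this

lemma key_induction : ∀ c : ℕ, ∀ σ : Config N, (tstarts σ).Nonempty →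
    (tstarts σ).card = c →
    (Pinf N ^ c) σ (fun _ => false) + (Pinf N ^ c) σ (fun _ => true) = 1 := by
  intro c
  induction c using Nat.strong_induction_on with
  | _ c IH =>
    intro σ hne hcard
    have hpos : 1 ≤ c := hcard ▸ Finset.card_pos.2 hne
    obtain ⟨k, rfl⟩ : ∃ k, c = k + 1 := ⟨c - 1, by omega⟩
    have hnc : ∃ i j : ZMod N, σ i ≠ σ j := by
      obtain ⟨a0, ha0⟩ := hne
      obtain ⟨-, h1, h2⟩ := Finset.mem_filter.1 ha0
      exact ⟨a0 - 1, a0, by rw [h1, h2]; simp⟩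
    rw [pow_succ', Matrix.mul_apply, Matrix.mul_apply, ← Finset.sum_add_distrib]
    have hterm : ∀ η : Config N,
        Pinf N σ η * (Pinf N ^ k) η (fun _ => false) +
          Pinf N σ η * (Pinf N ^ k) η (fun _ => true) = Pinf N σ η := by
      intro η
      by_cases h0 : Pinf N σ η = 0
      · rw [h0]; ring
      · have hmax : IsMaxMonoArc σ (diffSet σ η) := by
          by_contra hmax
          exact h0 (by simp only [Pinf]; rw [if_neg hmax])
        obtain ⟨a, ha, hAeq⟩ := maxArc_eq_run hmax hnc
        have hησ : η = flipSpins (run σ a) σ := by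
          rw [← hAeq, flip_diffSet]
        have hcards : (tstarts η).card + 1 = k + 1 := by
          rw [hησ, card_tstarts_flip ha, hcard]
        have hkcard : (tstarts η).card = k := by omega
        rcases Nat.eq_zero_or_pos k with rfl | hk
        · -- η is constant
          have hηe : ¬ (tstarts η).Nonempty := by
            rw [Finset.nonempty_iff_ne_empty, not_not]
            exact Finset.card_eq_zero.1 hkcard
          rcases const_of_tstarts_empty hηe with hη | hη
          · rw [pow_zero, hη, Matrix.one_apply_eq, Matrix.one_apply_ne const_ne_const]
            ring
          · rw [pow_zero, hη, Matrix.one_apply_eq,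
              Matrix.one_apply_ne (Ne.symm const_ne_const)]
            ring
        · have hIH := IH k (by omega) η (Finset.card_pos.1 (hkcard ▸ hk)) hkcard
          rw [← mul_add, hIH, mul_one]
    rw [Finset.sum_congr rfl (fun η _ => hterm η), row_sum]

end Aux6

/-- **The Wolff dynamics at the critical point `Ĵ = +∞`.**  One has
`P_∞(+𝟏,−𝟏) = 1` and `P_∞(−𝟏,+𝟏) = 1` (so on `{−𝟏,+𝟏}` the chain alternates
deterministically between the two constant configurations), and for every
non-constant `σ` with exactly `c` maximal monochromatic arcs of value `+1`,
the `c`-step transition probability from `σ` into `{−𝟏,+𝟏}` equals `1`. -/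
theorem wolff_critical_point (N : ℕ) (hN : 3 ≤ N) [NeZero N] :
    Pinf N (fun _ => true) (fun _ => false) = 1 ∧
    Pinf N (fun _ => false) (fun _ => true) = 1 ∧
    ∀ σ : Config N, (∃ i j : ZMod N, σ i ≠ σ j) →
      (Pinf N ^ numArcs N σ true) σ (fun _ => false) +
        (Pinf N ^ numArcs N σ true) σ (fun _ => true) = 1 := by
  have hconst : ∀ b : Bool,
      Pinf N (fun _ => b) (fun _ => !b) = 1 := by
    intro b
    have hd : diffSet (fun _ => b : Config N) (fun _ => !b) = Finset.univ := by
      ext i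
      simp only [diffSet, Finset.mem_filter, Finset.mem_univ, true_and, iff_true]
      cases b <;> simp
    simp only [Pinf]
    rw [hd, if_pos (isMaxMonoArc_univ_of_const (σ := fun _ => b) (fun _ _ => rfl)), card_univ_zmod,
      div_self (Nat.cast_ne_zero.2 (NeZero.ne N))]
  refine ⟨hconst true, hconst false, ?_⟩
  intro σ hnc
  rw [numArcs_eq_card_tstarts hnc]
  exact key_induction _ σ (tstarts_nonempty hnc) rfl
end
end

section
/- For every Ĵ ∈ [0,∞), every configuration σ ∈ Ω and every site i ∈ ℤ/Nℤ, the single-site transition probabilities of the Glauber and Wolff dynamics for the 1D Ising model satisfy P^GD(σ,σ^i) ≤ (1/2)·e^{2Ĵ}·P_W(σ,σ^i). -/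
open Real Finset

noncomputable section

/-- Single-site transition probability of the Glauber dynamics:
`P^GD(σ,σ^i) = (1/N)·e^{−Ĵσ_i(σ_{i−1}+σ_{i+1})} /
  (e^{Ĵ(σ_{i−1}+σ_{i+1})} + e^{−Ĵ(σ_{i−1}+σ_{i+1})})`. -/
noncomputable def PGDsite (N : ℕ) [NeZero N] (J : ℝ) (σ : Config N) (i : ZMod N) : ℝ :=
  (1 / (N : ℝ)) *
    (exp (-J * spin (σ i) * (spin (σ (i - 1)) + spin (σ (i + 1)))) /
      (exp (J * (spin (σ (i - 1)) + spin (σ (i + 1)))) +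
        exp (-J * (spin (σ (i - 1)) + spin (σ (i + 1))))))

lemma exp_key_aux (J : ℝ) (x y z : Bool) :
    exp (-J * spin y * (spin x + spin z)) /
      (exp (J * (spin x + spin z)) + exp (-J * (spin x + spin z)))
      ≤ 1/2 * exp (2*J) *
        exp (-2*J) ^ ((if x = y then 1 else 0) + (if y = z then 1 else 0)) := by
  have hEF : exp (J*2) * exp (-(J*2)) = 1 := by
    rw [← exp_add]; norm_num
  have hsum : 2 ≤ exp (J*2) + exp (-(J*2)) := by
    nlinarith [sq_nonneg (exp (J*2) - 1), exp_pos (J*2), exp_pos (-(J*2))]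
  have hE := exp_pos (J*2)
  have hF := exp_pos (-(J*2))
  cases x <;> cases y <;> cases z <;>
    simp [spin] <;> ring_nf <;>
    first
    | nlinarith [hEF, hsum, hE, hF]
    | (rw [mul_inv_le_iff₀ (by positivity)]; nlinarith [hEF, hsum, hE, hF])

/-- **Comparison of single-site transition probabilities** of the Glauber and
Wolff dynamics: `P^GD(σ,σ^i) ≤ (1/2)·e^{2Ĵ}·P_W(σ,σ^i)`. -/
theorem glauber_le_wolff_single_site (N : ℕ) (hN : 3 ≤ N) [NeZero N]
    (J : ℝ) (hJ : 0 ≤ J) (σ : Config N) (i : ZMod N) :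
    PGDsite N J σ i ≤ (1/2) * exp (2 * J) * PW N J σ (flipSpins {i} σ) := by
  classical
  haveI : Fact (1 < N) := ⟨by omega⟩
  have h10 : (1 : ZMod N) ≠ 0 := one_ne_zero
  have hii : i - 1 ≠ i := fun h => h10 (sub_eq_self.mp h)
  have hdiff : diffSet σ (flipSpins {i} σ) = {i} := by
    ext j
    by_cases h : j = i <;> simp [diffSet, flipSpins, h]
  have harc : IsArc ({i} : Finset (ZMod N)) := ⟨i, 0, by simp⟩
  have hconst : ConstOn σ ({i} : Finset (ZMod N)) := by
    intro a ha b hb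
    simp only [mem_singleton] at ha hb; rw [ha, hb]
  have hnuniv : ({i} : Finset (ZMod N)) ≠ univ := by
    intro h
    have : i - 1 ∈ ({i} : Finset (ZMod N)) := h.symm ▸ mem_univ _
    exact hii (mem_singleton.mp this)
  have hedge : edgeBoundary ({i} : Finset (ZMod N)) = {i - 1, i} := by
    ext j
    simp only [edgeBoundary, mem_filter, mem_univ, true_and, mem_singleton, mem_insert]
    constructor
    · intro h
      by_cases hj : j = i
      · exact Or.inr hj
      · left
        have hj1 : j + 1 = i := by tauto
        exact eq_sub_of_add_eq hj1
    · rintro (rfl | rfl) hiff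
      · have : i - 1 + 1 = i := sub_add_cancel i 1
        exact hii (hiff.mpr this)
      · exact h10 (add_eq_left.mp (hiff.mp rfl))
  have hinter : (edgeBoundary ({i} : Finset (ZMod N)) ∩ Bplus σ).card
      = (if σ (i-1) = σ i then 1 else 0) + (if σ i = σ (i+1) then 1 else 0) := by
    rw [hedge]
    have hfe : ({i-1, i} : Finset (ZMod N)) ∩ Bplus σ
        = ({i-1, i} : Finset (ZMod N)).filter (· ∈ Bplus σ) := by
      ext j; simp [and_comm]
    have hmA : ((i - 1 : ZMod N) ∈ Bplus σ) ↔ (σ (i-1) = σ i) := by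
      simp [Bplus, sub_add_cancel]
    have hmB : (i ∈ Bplus σ) ↔ (σ i = σ (i+1)) := by simp [Bplus]
    rw [hfe, Finset.filter_insert, Finset.filter_singleton]
    by_cases hA : σ (i-1) = σ i <;> by_cases hB : σ i = σ (i+1)
    · rw [if_pos (hmA.mpr hA), if_pos (hmB.mpr hB), if_pos hA, if_pos hB,
        Finset.card_insert_of_notMem (by simp [hii]), Finset.card_singleton]
    · rw [if_pos (hmA.mpr hA), if_neg (fun h => hB (hmB.mp h)), if_pos hA, if_neg hB]
      simp
    · rw [if_neg (fun h => hA (hmA.mp h)), if_pos (hmB.mpr hB), if_neg hA, if_pos hB]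
      simp
    · rw [if_neg (fun h => hA (hmA.mp h)), if_neg (fun h => hB (hmB.mp h)), if_neg hA,
        if_neg hB, Finset.card_empty]
  have hPW : PW N J σ (flipSpins {i} σ) = 1/(N:ℝ) * exp (-2*J) ^
      ((if σ (i-1) = σ i then 1 else 0) + (if σ i = σ (i+1) then 1 else 0)) := by
    rw [PW]
    rw [hdiff]
    rw [if_pos ⟨harc, hconst⟩, if_neg hnuniv, hinter]
    simp
  rw [hPW, PGDsite]
  have hkey := exp_key_aux J (σ (i-1)) (σ i) (σ (i+1))
  have hNpos : (0:ℝ) < (N:ℝ) := by positivity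
  calc (1 / (N : ℝ)) *
      (exp (-J * spin (σ i) * (spin (σ (i - 1)) + spin (σ (i + 1)))) /
        (exp (J * (spin (σ (i - 1)) + spin (σ (i + 1)))) +
          exp (-J * (spin (σ (i - 1)) + spin (σ (i + 1))))))
      ≤ (1 / (N : ℝ)) * (1/2 * exp (2*J) *
          exp (-2*J) ^ ((if σ (i-1) = σ i then 1 else 0) + (if σ i = σ (i+1) then 1 else 0))) := by
        apply mul_le_mul_of_nonneg_left hkey (by positivity)
    _ = 1 / 2 * exp (2 * J) * (1 / (N:ℝ) * exp (-2 * J) ^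
          ((if σ (i-1) = σ i then 1 else 0) + (if σ i = σ (i+1) then 1 else 0))) := by
        ring
end
end

section
/- For every Ĵ ∈ [0,∞) and every site i ∈ ℤ/Nℤ, the susceptibility of the 1D Ising model satisfies ∑_{j∈ℤ/Nℤ} E_{μ_N}[σ_i·σ_j] ≤ e^{2Ĵ}. -/
open Real Finset

noncomputable section

/-!
For a bond variable `τ = ±1` one has `exp (J τ) = cosh J + τ sinh J` and
`τ exp (J τ) = sinh J + τ cosh J`, and `σ_i σ_{i+d}` is the product of the `d` bonds from `i` to
`i + d`. Expanding `σ_i σ_{i+d} exp (J · energy)` as a polynomial in the bonds, only the monomials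
of the empty and of the full set of bonds survive the sum over configurations: any other set `U`
contains a bond `k` with `k + 1 ∉ U`, and flipping the spin at `k + 1` is a sign-reversing
involution. Hence, with `c = cosh J` and `s = sinh J`,
`E[σ_i σ_{i+d}] = (s^d c^(N-d) + c^d s^(N-d)) / (c^N + s^N)`, and the geometric sums over `d`
are at most `(c + s) / (c - s) = exp (2J)` because `s ≥ 0`.
-/

namespace Ising

lemma spin_mul_self (b : Bool) : spin b * spin b = 1 := by
  cases b <;> simp [spin]

lemma spin_not (b : Bool) : spin (!b) = -spin b := by
  cases b <;> simp [spin]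

lemma exp_mul_eq_cosh_add_sinh_mul {J τ : ℝ} (hτ : τ = 1 ∨ τ = -1) :
    exp (J * τ) = cosh J + sinh J * τ := by
  rcases hτ with rfl | rfl
  · rw [mul_one, mul_one, cosh_add_sinh]
  · rw [mul_neg_one, mul_neg_one, ← sub_eq_add_neg, cosh_sub_sinh]

lemma mul_exp_mul_eq_sinh_add_cosh_mul {J τ : ℝ} (hτ : τ = 1 ∨ τ = -1) :
    τ * exp (J * τ) = sinh J + cosh J * τ := by
  rcases hτ with rfl | rfl
  · rw [one_mul, mul_one, mul_one, add_comm, cosh_add_sinh]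
  · rw [neg_one_mul, mul_neg_one, mul_neg_one, ← cosh_sub_sinh]
    ring

lemma sum_range_pow_mul_pow_le {x y : ℝ} (hy : 0 ≤ y) (hyx : y < x) (n : ℕ) :
    ∑ d ∈ range n, (y ^ d * x ^ (n - d) + x ^ d * y ^ (n - d))
      ≤ (x + y) / (x - y) * (x ^ n + y ^ n) := by
  have split : ∑ d ∈ range n, (y ^ d * x ^ (n - d) + x ^ d * y ^ (n - d))
      = x * ∑ d ∈ range n, y ^ d * x ^ (n - 1 - d)
        + y * ∑ d ∈ range n, x ^ d * y ^ (n - 1 - d) := by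
    rw [mul_sum, mul_sum, ← sum_add_distrib]
    refine sum_congr rfl fun d hd => ?_
    obtain ⟨m, hm, hm'⟩ : ∃ m, n - d = m + 1 ∧ n - 1 - d = m :=
      ⟨n - 1 - d, by have := mem_range.1 hd; omega, rfl⟩
    rw [hm, hm']
    ring
  have telescoped : (∑ d ∈ range n, (y ^ d * x ^ (n - d) + x ^ d * y ^ (n - d))) * (x - y)
      = (x + y) * (x ^ n - y ^ n) := by
    rw [split]
    linear_combination (-x) * geom_sum₂_mul y x n + y * geom_sum₂_mul x y n
  rw [div_mul_eq_mul_div, le_div_iff₀ (sub_pos.2 hyx), telescoped]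
  exact mul_le_mul_of_nonneg_left (by linarith [pow_nonneg hy n]) (by linarith)

section Cycle

variable {N : ℕ}

def bond (σ : Config N) (k : ZMod N) : ℝ := spin (σ k) * spin (σ (k + 1))

lemma bond_eq_one_or_neg_one (σ : Config N) (k : ZMod N) : bond σ k = 1 ∨ bond σ k = -1 := by
  unfold bond; cases σ k <;> cases σ (k + 1) <;> simp [spin]

lemma spin_mul_spin_add_natCast_eq_prod_bond (σ : Config N) (i : ZMod N) (d : ℕ) :
    spin (σ i) * spin (σ (i + d)) = ∏ m ∈ range d, bond σ (i + m) := by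
  induction d with
  | zero => simp [spin_mul_self]
  | succ d ih =>
    rw [prod_range_succ, ← ih, bond, Nat.cast_succ, ← add_assoc]
    linear_combination (-(spin (σ i) * spin (σ (i + d + 1)))) * spin_mul_self (σ (i + d))

lemma injOn_add_natCast_range (i : ZMod N) {d : ℕ} (hd : d ≤ N) :
    Set.InjOn (fun m : ℕ => i + m) (range d) := by
  intro a ha b hb hab
  have hab' : ((a : ZMod N)).val = (b : ZMod N).val := by rw [add_left_cancel hab]
  rwa [ZMod.val_cast_of_lt ((mem_range.1 ha).trans_le hd),
    ZMod.val_cast_of_lt ((mem_range.1 hb).trans_le hd)] at hab'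

lemma prod_bond_update_not {U : Finset (ZMod N)} {k : ZMod N} (hk : k ∈ U) (hk' : k + 1 ∉ U)
    (σ : Config N) :
    ∏ e ∈ U, bond (Function.update σ (k + 1) !σ (k + 1)) e = -∏ e ∈ U, bond σ e := by
  have hne : k ≠ k + 1 := fun h => hk' (h ▸ hk)
  rw [← mul_prod_erase _ _ hk, ← mul_prod_erase _ _ hk]
  have other : ∀ e ∈ U.erase k, bond (Function.update σ (k + 1) !σ (k + 1)) e = bond σ e := by
    intro e he
    obtain ⟨hek, heU⟩ := mem_erase.1 he
    have he1 : e ≠ k + 1 := fun h => hk' (h ▸ heU)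
    have he2 : e + 1 ≠ k + 1 := fun h => hek (add_right_cancel h)
    simp [bond, Function.update_of_ne he1, Function.update_of_ne he2]
  have flipped : bond (Function.update σ (k + 1) !σ (k + 1)) k = -bond σ k := by
    simp [bond, Function.update_of_ne hne, spin_not]
  rw [prod_congr rfl other, flipped, neg_mul]

variable [NeZero N]

lemma energy_eq_sum_bond (σ : Config N) : energy N σ = ∑ k, bond σ k := rfl

lemma sum_eq_sum_range_add_natCast {M : Type*} [AddCommMonoid M] (f : ZMod N → M)
    (i : ZMod N) : ∑ j, f j = ∑ d ∈ range N, f (i + d) := by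
  rw [← Equiv.sum_comp (Equiv.addLeft i) f]
  exact sum_nbij' ZMod.val (fun d : ℕ => (d : ZMod N))
    (fun k _ => mem_range.2 (ZMod.val_lt k)) (fun _ _ => mem_univ _)
    (fun k _ => ZMod.natCast_zmod_val k) (fun _ hd => ZMod.val_cast_of_lt (mem_range.1 hd))
    (fun k _ => by simp)

lemma eq_univ_of_add_one_mem {U : Finset (ZMod N)} (hU : U.Nonempty)
    (h : ∀ k ∈ U, k + 1 ∈ U) : U = univ := by
  obtain ⟨u, hu⟩ := hU
  have add_natCast_mem (n : ℕ) : u + n ∈ U := by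
    induction n with
    | zero => simpa using hu
    | succ n ih => simpa [add_assoc] using h _ ih
  refine eq_univ_of_forall fun k => ?_
  simpa using add_natCast_mem (k - u).val

lemma prod_bond_univ (σ : Config N) : ∏ k, bond σ k = 1 := by
  have shift : ∏ k, spin (σ (k + 1)) = ∏ k, spin (σ k) :=
    Equiv.prod_comp (Equiv.addRight (1 : ZMod N)) fun k => spin (σ k)
  simp_rw [bond, prod_mul_distrib, shift, ← prod_mul_distrib, spin_mul_self, prod_const_one]

lemma sum_prod_bond_eq_zero {U : Finset (ZMod N)} (hU : U.Nonempty) (hU' : U ≠ univ) :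
    ∑ σ : Config N, ∏ e ∈ U, bond σ e = 0 := by
  obtain ⟨k, hk, hk'⟩ : ∃ k ∈ U, k + 1 ∉ U := by
    by_contra! h
    exact hU' (eq_univ_of_add_one_mem hU h)
  have flip : Function.Involutive fun σ : Config N => Function.update σ (k + 1) !σ (k + 1) :=
    fun σ => by simp
  have h := Equiv.sum_comp (flip.toPerm _) fun σ => ∏ e ∈ U, bond σ e
  simp only [Function.Involutive.coe_toPerm, prod_bond_update_not hk hk', sum_neg_distrib] at h
  linarith

lemma sum_prod_add_mul_bond (a b : ZMod N → ℝ) :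
    ∑ σ : Config N, ∏ k, (a k + b k * bond σ k) = 2 ^ N * (∏ k, a k + ∏ k, b k) := by
  have expand (σ : Config N) : ∏ k, (a k + b k * bond σ k)
      = ∑ U, ((∏ k ∈ Uᶜ, a k) * ∏ k ∈ U, b k) * ∏ k ∈ U, bond σ k := by
    calc ∏ k, (a k + b k * bond σ k) = ∏ k, (b k * bond σ k + a k) := by simp_rw [add_comm]
      _ = ∑ U, (∏ k ∈ U, b k * bond σ k) * ∏ k ∈ Uᶜ, a k := Fintype.prod_add _ _
      _ = _ := sum_congr rfl fun U _ => by rw [prod_mul_distrib]; ring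
  simp_rw [expand]
  rw [sum_comm]
  simp_rw [← mul_sum]
  rw [sum_eq_add_of_mem ∅ univ (mem_univ _) (mem_univ _) univ_nonempty.ne_empty.symm]
  · simp [prod_bond_univ, ZMod.card, add_mul, mul_comm]
  · rintro U - ⟨hU, hU'⟩
    rw [sum_prod_bond_eq_zero (nonempty_iff_ne_empty.2 hU) hU', mul_zero]

lemma sum_prod_bond_mul_exp_energy (J : ℝ) (A : Finset (ZMod N)) :
    ∑ σ : Config N, (∏ k ∈ A, bond σ k) * exp (J * energy N σ)
      = 2 ^ N * (sinh J ^ #A * cosh J ^ (N - #A) + cosh J ^ #A * sinh J ^ (N - #A)) := by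
  have pointwise (σ : Config N) : (∏ k ∈ A, bond σ k) * exp (J * energy N σ)
      = ∏ k, (A.piecewise (fun _ => sinh J) (fun _ => cosh J) k
          + A.piecewise (fun _ => cosh J) (fun _ => sinh J) k * bond σ k) := by
    rw [energy_eq_sum_bond, mul_sum, exp_sum, ← prod_mul_prod_compl A, ← mul_assoc,
      ← prod_mul_distrib, ← prod_mul_prod_compl A]
    congr 1 <;> refine prod_congr rfl fun k hk => ?_
    · simp [hk, mul_exp_mul_eq_sinh_add_cosh_mul (bond_eq_one_or_neg_one σ k)]
    · simp [mem_compl.1 hk, exp_mul_eq_cosh_add_sinh_mul (bond_eq_one_or_neg_one σ k)]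
  simp_rw [pointwise, sum_prod_add_mul_bond, prod_piecewise, univ_inter, ← compl_eq_univ_sdiff,
    prod_const, card_compl, ZMod.card]

lemma sum_exp_energy (J : ℝ) :
    ∑ σ : Config N, exp (J * energy N σ) = 2 ^ N * (cosh J ^ N + sinh J ^ N) := by
  simpa using sum_prod_bond_mul_exp_energy (N := N) J ∅

lemma emu_eq_sum_mul_exp_div (J : ℝ) (f : Config N → ℝ) :
    Emu N J f = (∑ σ, f σ * exp (J * energy N σ)) / ∑ σ, exp (J * energy N σ) := by
  simp only [Emu, gibbs, mul_div_assoc, sum_div]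

lemma emu_spin_mul_spin_add_natCast (J : ℝ) (i : ZMod N) {d : ℕ} (hd : d ≤ N) :
    Emu N J (fun σ => spin (σ i) * spin (σ (i + d)))
      = (sinh J ^ d * cosh J ^ (N - d) + cosh J ^ d * sinh J ^ (N - d))
          / (cosh J ^ N + sinh J ^ N) := by
  have hinj := injOn_add_natCast_range i hd
  have arc (σ : Config N) :
      spin (σ i) * spin (σ (i + d)) = ∏ k ∈ (range d).image (fun m : ℕ => i + m), bond σ k := by
    rw [spin_mul_spin_add_natCast_eq_prod_bond, prod_image hinj]
  simp_rw [emu_eq_sum_mul_exp_div, arc, sum_prod_bond_mul_exp_energy, sum_exp_energy,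
    card_image_of_injOn hinj, card_range]
  exact mul_div_mul_left _ _ (by positivity)

end Cycle

end Ising

theorem susceptibility_le_general (N : ℕ) [NeZero N]
    (J : ℝ) (hJ : 0 ≤ J) (i : ZMod N) :
    ∑ j : ZMod N, Emu N J (fun σ => spin (σ i) * spin (σ j)) ≤ exp (2 * J) := by
  have hs : 0 ≤ sinh J := sinh_nonneg_iff.2 hJ
  calc ∑ j, Emu N J (fun σ => spin (σ i) * spin (σ j))
      = ∑ d ∈ range N, Emu N J (fun σ => spin (σ i) * spin (σ (i + d))) :=
        Ising.sum_eq_sum_range_add_natCast _ i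
    _ = (∑ d ∈ range N, (sinh J ^ d * cosh J ^ (N - d) + cosh J ^ d * sinh J ^ (N - d)))
          / (cosh J ^ N + sinh J ^ N) := by
        rw [sum_div]
        exact sum_congr rfl fun d hd => Ising.emu_spin_mul_spin_add_natCast J i (mem_range.1 hd).le
    _ ≤ (cosh J + sinh J) / (cosh J - sinh J) := by
        rw [div_le_iff₀ (add_pos_of_pos_of_nonneg (pow_pos (cosh_pos J) N) (pow_nonneg hs N))]
        exact Ising.sum_range_pow_mul_pow_le hs (sinh_lt_cosh J) N
    _ = exp (2 * J) := by
        rw [cosh_add_sinh, cosh_sub_sinh, ← exp_sub]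
        ring_nf

/-- **Susceptibility bound for the 1D Ising model**: for every `Ĵ ∈ [0,∞)` and
every site `i`, `∑_j E_{μ_N}[σ_i σ_j] ≤ e^{2Ĵ}`. -/
theorem susceptibility_le (N : ℕ) (hN : 3 ≤ N) [NeZero N]
    (J : ℝ) (hJ : 0 ≤ J) (i : ZMod N) :
    ∑ j : ZMod N, Emu N J (fun σ => spin (σ i) * spin (σ j)) ≤ exp (2 * J) :=
  susceptibility_le_general N J hJ i
end
end

section
/- Set λ₊ = e^Ĵ + e^{−Ĵ}, λ₋ = e^Ĵ − e^{−Ĵ}, and θ = λ₋/λ₊. For every Ĵ ∈ [0,∞) and every site i ∈ ℤ/Nℤ, the 1D Ising model satisfies ∑_{j∈ℤ/Nℤ} E_{μ_N}[σ_i·σ_j] ≤ 1 + (2λ₊/(λ₊ − λ₋))·(θ − θ^N)/(1 + θ^N). -/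
open Real Finset

noncomputable section

namespace IsingAux

noncomputable def wgt (J : ℝ) (a b : Bool) : ℝ := if a = b then exp J else exp (-J)

noncomputable def Af (J : ℝ) (n : ℕ) : ℝ :=
  ((exp J + exp (-J)) ^ n + (exp J - exp (-J)) ^ n) / 2
noncomputable def Bf (J : ℝ) (n : ℕ) : ℝ :=
  ((exp J + exp (-J)) ^ n - (exp J - exp (-J)) ^ n) / 2

noncomputable def Wm (J : ℝ) (n : ℕ) (a b : Bool) : ℝ := if a = b then Af J n else Bf J n

lemma Wm_zero (J : ℝ) (a b : Bool) : Wm J 0 a b = if a = b then 1 else 0 := by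
  cases a <;> cases b <;> simp [Wm, Af, Bf]

lemma Wm_succ_right (J : ℝ) (n : ℕ) (a b : Bool) :
    ∑ c : Bool, Wm J n a c * wgt J c b = Wm J (n + 1) a b := by
  cases a <;> cases b <;>
    simp [Wm, wgt, Af, Bf, Fintype.sum_bool, pow_succ] <;> ring

lemma Wm_symm (J : ℝ) (n : ℕ) (a b : Bool) : Wm J n a b = Wm J n b a := by
  cases a <;> cases b <;> simp [Wm]

lemma Wm_succ_left (J : ℝ) (n : ℕ) (a b : Bool) :
    ∑ c : Bool, wgt J a c * Wm J n c b = Wm J (n + 1) a b := by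
  cases a <;> cases b <;>
    simp [Wm, wgt, Af, Bf, Fintype.sum_bool, pow_succ] <;> ring

/-- Ordered product of 2×2 matrices given by `M 0, M 1, …, M (n-1)`. -/
noncomputable def Pm (M : ℕ → Bool → Bool → ℝ) : ℕ → Bool → Bool → ℝ
  | 0 => fun a b => if a = b then 1 else 0
  | n + 1 => fun a b => ∑ c : Bool, Pm M n a c * M n c b

lemma pathSum (M : ℕ → Bool → Bool → ℝ) :
    ∀ (n : ℕ) (h : Bool → Bool → ℝ),
      ∑ g : Fin (n + 1) → Bool,
        h (g 0) (g (Fin.last n)) * ∏ t : Fin n, M t (g t.castSucc) (g t.succ)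
      = ∑ a : Bool, ∑ b : Bool, h a b * Pm M n a b := by
  intro n
  induction n with
  | zero =>
    intro h
    rw [Fintype.sum_equiv (Equiv.funUnique (Fin 1) Bool) _
      (fun b => h b b * 1) (fun g => by simp [Fin.last])]
    simp [Pm]
  | succ n ih =>
    intro h
    rw [← Equiv.sum_comp (Fin.snocEquiv (fun _ => Bool))]
    rw [Fintype.sum_prod_type]
    have key : ∀ (b : Bool) (g : Fin (n+1) → Bool),
        (Fin.snocEquiv (fun _ => Bool)) (b, g) = Fin.snoc g b := by
      intro b g; ext i; simp [Fin.snocEquiv]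
    calc ∑ b : Bool, ∑ g : Fin (n+1) → Bool,
          (fun g' : Fin (n+2) → Bool => h (g' 0) (g' (Fin.last (n+1))) *
            ∏ t : Fin (n+1), M t (g' t.castSucc) (g' t.succ)) ((Fin.snocEquiv (fun _ => Bool)) (b, g))
        = ∑ b : Bool, ∑ g : Fin (n+1) → Bool,
            (h (g 0) b * M n (g (Fin.last n)) b) * ∏ t : Fin n, M t (g t.castSucc) (g t.succ) := by
          refine Finset.sum_congr rfl fun b _ => Finset.sum_congr rfl fun g _ => ?_
          rw [key]
          dsimp only
          rw [Fin.prod_univ_castSucc]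
          have h0 : (Fin.snoc g b : Fin (n+2) → Bool) 0 = g 0 := by
            have : (0 : Fin (n+2)) = Fin.castSucc 0 := rfl
            rw [this, Fin.snoc_castSucc]
          have hlast : (Fin.snoc g b : Fin (n+2) → Bool) (Fin.last (n+1)) = b :=
            Fin.snoc_last _ _
          rw [h0, hlast]
          have hterm : ∀ t : Fin n,
              M (t.castSucc) ((Fin.snoc g b : Fin (n+2) → Bool) t.castSucc.castSucc)
                ((Fin.snoc g b : Fin (n+2) → Bool) t.castSucc.succ)
              = M t (g t.castSucc) (g t.succ) := by
            intro t
            rw [Fin.succ_castSucc, Fin.snoc_castSucc, Fin.snoc_castSucc]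
            simp
          have hlastterm :
              M ((Fin.last n : Fin (n+1)) : ℕ)
                ((Fin.snoc g b : Fin (n+2) → Bool) (Fin.last n).castSucc)
                ((Fin.snoc g b : Fin (n+2) → Bool) (Fin.last n).succ)
              = M n (g (Fin.last n)) b := by
            rw [Fin.snoc_castSucc, Fin.succ_last, Fin.snoc_last]
            simp
          rw [Finset.prod_congr rfl (fun t _ => hterm t), hlastterm]
          ring
      _ = ∑ b : Bool, ∑ a : Bool, ∑ c : Bool, (h a b * M n c b) * Pm M n a c := by
          exact Finset.sum_congr rfl fun b _ => ih (fun a c => h a b * M n c b)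
      _ = ∑ a : Bool, ∑ b : Bool, h a b * Pm M (n+1) a b := by
          rw [Finset.sum_comm]
          refine Finset.sum_congr rfl fun a _ => Finset.sum_congr rfl fun b _ => ?_
          simp only [Pm, Finset.mul_sum]
          exact Finset.sum_congr rfl fun c _ => by ring


def zmodEquiv (N : ℕ) [NeZero N] : Fin N ≃ ZMod N where
  toFun t := ((t : ℕ) : ZMod N)
  invFun z := ⟨z.val, z.val_lt⟩
  left_inv t := by
    ext
    exact ZMod.val_cast_of_lt t.isLt
  right_inv z := ZMod.natCast_rightInverse z

lemma cycleSum (N : ℕ) [NeZero N] (M : ℕ → Bool → Bool → ℝ) :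
    ∑ σ : ZMod N → Bool,
      ∏ t : Fin N, M t (σ ((t : ℕ) : ZMod N)) (σ (((t : ℕ) : ZMod N) + 1))
    = ∑ a : Bool, Pm M N a a := by
  have hNpos : 0 < N := Nat.pos_of_ne_zero (NeZero.ne N)
  -- common middle expression
  set Mid : ℝ := ∑ g : Fin N → Bool,
    ∏ t : Fin N, M t (g t) (g ⟨((t : ℕ) + 1) % N, Nat.mod_lt _ hNpos⟩) with hMid
  have hL : ∑ σ : ZMod N → Bool,
      ∏ t : Fin N, M t (σ ((t : ℕ) : ZMod N)) (σ (((t : ℕ) : ZMod N) + 1)) = Mid := by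
    refine Fintype.sum_equiv ((zmodEquiv N).symm.arrowCongr (Equiv.refl Bool)) _ _ fun σ => ?_
    refine Finset.prod_congr rfl fun t _ => ?_
    have h1 : ((zmodEquiv N).symm.arrowCongr (Equiv.refl Bool)) σ t = σ ((t : ℕ) : ZMod N) := rfl
    have h2 : ((zmodEquiv N).symm.arrowCongr (Equiv.refl Bool)) σ
        ⟨((t : ℕ) + 1) % N, Nat.mod_lt _ hNpos⟩
        = σ ((((t : ℕ) + 1) % N : ℕ) : ZMod N) := rfl
    rw [h1, h2, ZMod.natCast_mod]
    push_cast
    rfl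
  have hR : Mid = ∑ a : Bool, Pm M N a a := by
    have := pathSum M N (fun a b => if b = a then 1 else 0)
    rw [← Equiv.sum_comp (Fin.snocEquiv (fun _ => Bool)), Fintype.sum_prod_type,
      Finset.sum_comm] at this
    have key : ∀ (g : Fin N → Bool) (b : Bool),
        (Fin.snocEquiv (fun _ => Bool)) (b, g) = Fin.snoc g b := by
      intro g b; ext i; simp [Fin.snocEquiv]
    calc Mid = ∑ g : Fin N → Bool, ∑ b : Bool,
        (fun g' : Fin (N+1) → Bool => (if g' (Fin.last N) = g' 0 then (1:ℝ) else 0) *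
          ∏ t : Fin N, M t (g' t.castSucc) (g' t.succ)) ((Fin.snocEquiv (fun _ => Bool)) (b, g)) := by
          refine Finset.sum_congr rfl fun g _ => ?_
          rw [Fintype.sum_eq_single (g 0)]
          · rw [key]
            dsimp only
            have h0 : (Fin.snoc g (g 0) : Fin (N+1) → Bool) 0 = g 0 := by
              have hz : (0 : Fin (N+1)) = Fin.castSucc (0 : Fin N) := by
                ext; simp
              rw [hz, Fin.snoc_castSucc]
            rw [Fin.snoc_last, h0, if_pos rfl, one_mul]
            refine Finset.prod_congr rfl fun t _ => ?_
            congr 1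
            · exact (Fin.snoc_castSucc (α := fun _ => Bool) (g 0) g t).symm
            · -- g ⟨(t+1) % N⟩ = snoc g (g 0) t.succ
              rcases Nat.lt_or_ge ((t : ℕ) + 1) N with h | h
              · have hs : (t.succ : Fin (N+1)) = Fin.castSucc ⟨(t : ℕ) + 1, h⟩ := by
                  ext; simp
                rw [hs, Fin.snoc_castSucc]
                congr 1
                ext
                simp [Nat.mod_eq_of_lt h]
              · have hN : (t : ℕ) + 1 = N := le_antisymm t.isLt h
                have hs : (t.succ : Fin (N+1)) = Fin.last N := by
                  ext; simp [hN]
                rw [hs, Fin.snoc_last]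
                congr 1
                ext
                simp [hN]
          · intro b hb
            rw [key]
            dsimp only
            have h0 : (Fin.snoc g b : Fin (N+1) → Bool) 0 = g 0 := by
              have hz : (0 : Fin (N+1)) = Fin.castSucc (0 : Fin N) := by
                ext; simp
              rw [hz, Fin.snoc_castSucc]
            rw [Fin.snoc_last, h0, if_neg hb, zero_mul]
      _ = ∑ a : Bool, ∑ b : Bool, (if b = a then (1:ℝ) else 0) * Pm M N a b := this
      _ = ∑ a : Bool, Pm M N a a := by
          refine Finset.sum_congr rfl fun a _ => ?_
          rw [Fintype.sum_eq_single a] <;> simp +contextual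
  rw [hL, hR]

lemma Pm_stretch (J : ℝ) (M : ℕ → Bool → Bool → ℝ) :
    ∀ (m n : ℕ), (∀ t, n ≤ t → t < n + m → M t = wgt J) →
    ∀ a b, Pm M (n + m) a b = ∑ c : Bool, Pm M n a c * Wm J m c b := by
  intro m
  induction m with
  | zero =>
    intro n _ a b
    rw [Fintype.sum_eq_single b] <;> simp +contextual [Wm_zero]
  | succ m ih =>
    intro n hM a b
    have : n + (m + 1) = (n + m) + 1 := rfl
    rw [this]
    show ∑ c : Bool, Pm M (n + m) a c * M (n + m) c b = _
    have hMeq : M (n + m) = wgt J := hM _ (Nat.le_add_right _ _) (by omega)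
    calc ∑ c : Bool, Pm M (n + m) a c * M (n + m) c b
        = ∑ c : Bool, (∑ c' : Bool, Pm M n a c' * Wm J m c' c) * wgt J c b := by
          refine Finset.sum_congr rfl fun c _ => ?_
          rw [ih n (fun t ht ht' => hM t ht (by omega)) a c, hMeq]
      _ = ∑ c' : Bool, Pm M n a c' * ∑ c : Bool, Wm J m c' c * wgt J c b := by
          simp only [Finset.sum_mul, Finset.mul_sum]
          rw [Finset.sum_comm]
          exact Finset.sum_congr rfl fun c' _ => Finset.sum_congr rfl fun c _ => by ring
      _ = ∑ c' : Bool, Pm M n a c' * Wm J (m + 1) c' b := by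
          refine Finset.sum_congr rfl fun c' _ => ?_
          rw [Wm_succ_right]

lemma Pm_eq_of_wgt (J : ℝ) (M : ℕ → Bool → Bool → ℝ) (n : ℕ)
    (hM : ∀ t, t < n → M t = wgt J) (a b : Bool) : Pm M n a b = Wm J n a b := by
  have := Pm_stretch J M n 0 (fun t ht ht' => hM t (by omega)) a b
  rw [Nat.zero_add] at this
  rw [this, Fintype.sum_eq_single a] <;> simp +contextual [Pm]

lemma spin_mul_self (a : Bool) : spin a * spin a = 1 := by cases a <;> simp [spin]

lemma exp_spin (J : ℝ) (a b : Bool) :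
    exp (J * (spin a * spin b)) = wgt J a b := by
  cases a <;> cases b <;> simp [spin, wgt]

lemma prod_wgt (N : ℕ) [NeZero N] (J : ℝ) (σ : ZMod N → Bool) :
    ∏ t : Fin N, wgt J (σ ((t : ℕ) : ZMod N)) (σ (((t : ℕ) : ZMod N) + 1))
      = exp (J * energy N σ) := by
  rw [energy, Finset.mul_sum, exp_sum]
  rw [← Equiv.prod_comp (zmodEquiv N) (fun i => exp (J * (spin (σ i) * spin (σ (i + 1)))))]
  exact Finset.prod_congr rfl fun t _ => (exp_spin J _ _).symm

lemma Z_eq (N : ℕ) [NeZero N] (J : ℝ) :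
    ∑ σ : ZMod N → Bool, exp (J * energy N σ) = 2 * Af J N := by
  calc ∑ σ : ZMod N → Bool, exp (J * energy N σ)
      = ∑ σ : ZMod N → Bool,
          ∏ t : Fin N, wgt J (σ ((t : ℕ) : ZMod N)) (σ (((t : ℕ) : ZMod N) + 1)) :=
        Finset.sum_congr rfl fun σ _ => (prod_wgt N J σ).symm
    _ = ∑ a : Bool, Pm (fun _ => wgt J) N a a := cycleSum N (fun _ => wgt J)
    _ = ∑ a : Bool, Wm J N a a :=
        Finset.sum_congr rfl fun a _ => Pm_eq_of_wgt J _ N (fun _ _ => rfl) a a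
    _ = 2 * Af J N := by rw [Fintype.sum_bool]; simp [Wm]; ring

lemma num_eq (N : ℕ) [NeZero N] (J : ℝ) {k : ℕ} (hk : k < N) :
    ∑ σ : ZMod N → Bool,
      spin (σ 0) * spin (σ ((k : ℕ) : ZMod N)) * exp (J * energy N σ)
    = (exp J + exp (-J)) ^ k * (exp J - exp (-J)) ^ (N - k)
      + (exp J - exp (-J)) ^ k * (exp J + exp (-J)) ^ (N - k) := by
  have hNpos : 0 < N := Nat.pos_of_ne_zero (NeZero.ne N)
  set M : ℕ → Bool → Bool → ℝ :=
    fun t a b => (if t = 0 then spin a else 1) * (if t = k then spin a else 1) * wgt J a b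
    with hM
  have step1 : ∀ σ : ZMod N → Bool,
      spin (σ 0) * spin (σ ((k : ℕ) : ZMod N)) * exp (J * energy N σ)
      = ∏ t : Fin N, M t (σ ((t : ℕ) : ZMod N)) (σ (((t : ℕ) : ZMod N) + 1)) := by
    intro σ
    simp only [hM]
    rw [Finset.prod_mul_distrib, Finset.prod_mul_distrib, prod_wgt N J σ]
    congr 2
    · rw [Fintype.prod_eq_single (⟨0, hNpos⟩ : Fin N)]
      · simp
      · intro t ht
        have : (t : ℕ) ≠ 0 := fun h => ht (Fin.ext h)
        simp [this]
    · rw [Fintype.prod_eq_single (⟨k, hk⟩ : Fin N)]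
      · simp
      · intro t ht
        have : (t : ℕ) ≠ k := fun h => ht (Fin.ext h)
        simp [this]
  rw [Finset.sum_congr rfl fun σ _ => step1 σ, cycleSum N M]
  rcases Nat.eq_zero_or_pos k with hk0 | hk1
  · -- k = 0 : M is extensionally wgt
    subst hk0
    have hMw : ∀ t, t < N → M t = wgt J := by
      intro t _
      rcases Nat.eq_zero_or_pos t with h0 | h0
      · subst h0; funext a b; simp [hM, spin_mul_self a]
      · have ht : t ≠ 0 := by omega
        funext a b; simp [hM, ht]
    rw [Finset.sum_congr rfl fun a _ => Pm_eq_of_wgt J M N hMw a a]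
    simp [Fintype.sum_bool, Wm, Af, Bf]
    ring
  · -- 1 ≤ k
    have hk0 : k ≠ 0 := by omega
    have h1 : ∀ a b, Pm M 1 a b = spin a * wgt J a b := by
      intro a b
      show ∑ c : Bool, Pm M 0 a c * M 0 c b = _
      rw [Fintype.sum_eq_single a]
      · simp [Pm, hM, Ne.symm hk0]
      · intro c hc; simp [Pm, Ne.symm hc]
    have h2 : ∀ a b, Pm M k a b = spin a * Wm J k a b := by
      intro a b
      have hs := Pm_stretch J M (k - 1) 1 (by
        intro t ht ht'
        have ht1 : t ≠ 0 := by omega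
        have ht2 : t ≠ k := by omega
        funext a b; simp [hM, ht1, ht2]) a b
      have hk' : 1 + (k - 1) = k := by omega
      rw [hk'] at hs
      rw [hs]
      calc ∑ c : Bool, Pm M 1 a c * Wm J (k - 1) c b
          = spin a * ∑ c : Bool, wgt J a c * Wm J (k - 1) c b := by
            rw [Finset.mul_sum]
            exact Finset.sum_congr rfl fun c _ => by rw [h1]; ring
        _ = spin a * Wm J k a b := by rw [Wm_succ_left]; congr 2; omega
    have h4 : ∀ a b, Pm M N a b
        = ∑ c : Bool, spin a * Wm J k a c * spin c * Wm J (N - k) c b := by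
      intro a b
      have hs := Pm_stretch J M (N - (k + 1)) (k + 1) (by
        intro t ht ht'
        have ht1 : t ≠ 0 := by omega
        have ht2 : t ≠ k := by omega
        funext a b; simp [hM, ht1, ht2]) a b
      have hN' : (k + 1) + (N - (k + 1)) = N := by omega
      rw [hN'] at hs
      rw [hs]
      have h3 : ∀ c : Bool, Pm M (k + 1) a c
          = ∑ c' : Bool, spin a * Wm J k a c' * spin c' * wgt J c' c := by
        intro c
        show ∑ c' : Bool, Pm M k a c' * M k c' c = _
        refine Finset.sum_congr rfl fun c' _ => ?_
        rw [h2]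
        simp [hM, hk0]
        ring
      calc ∑ c : Bool, Pm M (k + 1) a c * Wm J (N - (k + 1)) c b
          = ∑ c : Bool, ∑ c' : Bool,
              (spin a * Wm J k a c' * spin c') * (wgt J c' c * Wm J (N - (k + 1)) c b) := by
            refine Finset.sum_congr rfl fun c _ => ?_
            rw [h3, Finset.sum_mul]
            exact Finset.sum_congr rfl fun c' _ => by ring
        _ = ∑ c' : Bool, (spin a * Wm J k a c' * spin c') *
              ∑ c : Bool, wgt J c' c * Wm J (N - (k + 1)) c b := by
            rw [Finset.sum_comm]
            exact Finset.sum_congr rfl fun c' _ => by rw [Finset.mul_sum]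
        _ = ∑ c : Bool, spin a * Wm J k a c * spin c * Wm J (N - k) c b := by
            refine Finset.sum_congr rfl fun c' _ => ?_
            rw [Wm_succ_left]
            have : N - (k + 1) + 1 = N - k := by omega
            rw [this]
    rw [Finset.sum_congr rfl fun a _ => h4 a a]
    simp [Fintype.sum_bool, Wm, spin, Af, Bf]
    ring

end IsingAux


/-- **Explicit susceptibility bound for the 1D Ising model.**  With
`λ₊ = e^Ĵ + e^{−Ĵ}`, `λ₋ = e^Ĵ − e^{−Ĵ}` and `θ = λ₋/λ₊`, for every
`Ĵ ∈ [0,∞)` and every site `i`,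
`∑_j E_{μ_N}[σ_i σ_j] ≤ 1 + (2λ₊/(λ₊−λ₋))·(θ − θ^N)/(1 + θ^N)`. -/
theorem susceptibility_le_explicit (N : ℕ) (hN : 3 ≤ N) [NeZero N]
    (J : ℝ) (hJ : 0 ≤ J) (i : ZMod N)
    (lp lm θ : ℝ) (hlp : lp = exp J + exp (-J)) (hlm : lm = exp J - exp (-J))
    (hθ : θ = lm / lp) :
    ∑ j : ZMod N, Emu N J (fun σ => spin (σ i) * spin (σ j)) ≤
      1 + (2 * lp / (lp - lm)) * (θ - θ ^ N) / (1 + θ ^ N) := by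
  have hNpos : 0 < N := by omega
  have hppos : 0 < lp := by rw [hlp]; positivity
  have hq0 : 0 ≤ lm := by
    rw [hlm]
    have := Real.exp_le_exp.mpr (neg_le_self hJ)
    linarith
  have hqp : lm < lp := by
    rw [hlp, hlm]
    have := exp_pos (-J)
    linarith
  have hθ0 : 0 ≤ θ := by rw [hθ]; exact div_nonneg hq0 hppos.le
  have hθ1 : θ < 1 := by rw [hθ]; exact (div_lt_one hppos).mpr hqp
  have hqθ : lm = θ * lp := by rw [hθ]; field_simp
  have h1θN : (0:ℝ) < 1 + θ ^ N := by
    have : (0:ℝ) ≤ θ ^ N := pow_nonneg hθ0 N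
    linarith
  set Z := ∑ η : Config N, exp (J * energy N η) with hZdef
  have hZ : Z = lp ^ N * (1 + θ ^ N) := by
    rw [hZdef, IsingAux.Z_eq N J]
    simp only [IsingAux.Af]
    rw [← hlp, ← hlm, hqθ, mul_pow]
    ring
  have hZpos : 0 < Z := by
    rw [hZ]
    have := pow_pos hppos N
    positivity
  have hEmu : ∀ f : Config N → ℝ,
      Emu N J f = (∑ σ : Config N, f σ * exp (J * energy N σ)) / Z := by
    intro f
    rw [Emu, Finset.sum_div]
    refine Finset.sum_congr rfl fun σ _ => ?_
    rw [gibbs, ← hZdef]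
    ring
  have htrans : ∀ j : ZMod N,
      (∑ σ : Config N, spin (σ i) * spin (σ j) * exp (J * energy N σ))
      = ∑ σ : Config N, spin (σ 0) * spin (σ (j - i)) * exp (J * energy N σ) := by
    intro j
    refine Fintype.sum_equiv ((Equiv.subRight i).arrowCongr (Equiv.refl Bool))
      _ (fun σ => spin (σ 0) * spin (σ (j - i)) * exp (J * energy N σ)) fun σ => ?_
    have hT : ∀ k : ZMod N,
        ((Equiv.subRight i).arrowCongr (Equiv.refl Bool)) σ k = σ (k + i) := fun k => rfl
    have hE : energy N (fun k => σ (k + i)) = energy N σ := by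
      rw [energy, energy]
      refine Fintype.sum_equiv (Equiv.addRight i) _ _ fun k => ?_
      have : k + 1 + i = k + i + 1 := by ring
      simp only [Equiv.coe_addRight]
      rw [this]
    calc spin (σ i) * spin (σ j) * exp (J * energy N σ)
        = spin (σ (0 + i)) * spin (σ (j - i + i)) *
            exp (J * energy N (fun k => σ (k + i))) := by
          rw [zero_add, sub_add_cancel, hE]
      _ = _ := by
          congr 1
  have hcorr : ∀ j : ZMod N, Emu N J (fun σ => spin (σ i) * spin (σ j))
      = (∑ σ : Config N, spin (σ 0) * spin (σ (j - i)) * exp (J * energy N σ)) / Z := by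
    intro j
    rw [hEmu, htrans j]
  rw [Finset.sum_congr rfl fun j _ => hcorr j, ← Finset.sum_div]
  have hreindex :
      (∑ j : ZMod N, ∑ σ : Config N,
        spin (σ 0) * spin (σ (j - i)) * exp (J * energy N σ))
      = ∑ k ∈ Finset.range N, (lp ^ k * lm ^ (N - k) + lm ^ k * lp ^ (N - k)) := by
    calc (∑ j : ZMod N, ∑ σ : Config N,
          spin (σ 0) * spin (σ (j - i)) * exp (J * energy N σ))
        = ∑ d : ZMod N, ∑ σ : Config N,
            spin (σ 0) * spin (σ d) * exp (J * energy N σ) :=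
          Fintype.sum_equiv (Equiv.subRight i) _
            (fun d => ∑ σ : Config N, spin (σ 0) * spin (σ d) * exp (J * energy N σ))
            fun j => rfl
      _ = ∑ t : Fin N, ∑ σ : Config N,
            spin (σ 0) * spin (σ (((t : ℕ) : ZMod N))) * exp (J * energy N σ) :=
          (Fintype.sum_equiv (IsingAux.zmodEquiv N) _
            (fun d => ∑ σ : Config N, spin (σ 0) * spin (σ d) * exp (J * energy N σ))
            fun t => rfl).symm
      _ = ∑ t : Fin N, (lp ^ (t : ℕ) * lm ^ (N - (t : ℕ)) + lm ^ (t : ℕ) * lp ^ (N - (t : ℕ))) := by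
          refine Finset.sum_congr rfl fun t _ => ?_
          rw [IsingAux.num_eq N J t.isLt, ← hlp, ← hlm]
      _ = ∑ k ∈ Finset.range N, (lp ^ k * lm ^ (N - k) + lm ^ k * lp ^ (N - k)) :=
          Fin.sum_univ_eq_sum_range (fun k => lp ^ k * lm ^ (N - k) + lm ^ k * lp ^ (N - k)) N
  rw [hreindex]
  have hsum : ∑ k ∈ Finset.range N, (lp ^ k * lm ^ (N - k) + lm ^ k * lp ^ (N - k))
      = lp ^ N * ((1 + θ) * ∑ k ∈ Finset.range N, θ ^ k) := by
    have hterm : ∀ k ∈ Finset.range N,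
        lp ^ k * lm ^ (N - k) + lm ^ k * lp ^ (N - k)
        = lp ^ N * θ ^ (N - k) + lp ^ N * θ ^ k := by
      intro k hk
      have hkN : k + (N - k) = N := by
        have := Finset.mem_range.mp hk; omega
      rw [hqθ, mul_pow, mul_pow]
      have e1 : lp ^ k * lp ^ (N - k) = lp ^ N := by rw [← pow_add, hkN]
      linear_combination (θ ^ (N - k) + θ ^ k) * e1
    rw [Finset.sum_congr rfl hterm, Finset.sum_add_distrib]
    have hrefl : ∑ k ∈ Finset.range N, lp ^ N * θ ^ (N - k)
        = lp ^ N * (θ * ∑ k ∈ Finset.range N, θ ^ k) := by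
      rw [← Finset.mul_sum]
      congr 1
      calc ∑ k ∈ Finset.range N, θ ^ (N - k)
          = ∑ k ∈ Finset.range N, θ ^ ((N - 1 - k) + 1) := by
            refine Finset.sum_congr rfl fun k hk => ?_
            have := Finset.mem_range.mp hk
            congr 1
            omega
        _ = ∑ k ∈ Finset.range N, θ ^ (k + 1) :=
            Finset.sum_range_reflect (fun j => θ ^ (j + 1)) N
        _ = θ * ∑ k ∈ Finset.range N, θ ^ k := by
            rw [Finset.mul_sum]
            exact Finset.sum_congr rfl fun k _ => by ring
    rw [hrefl, ← Finset.mul_sum]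
    ring
  rw [hsum, hZ, geom_sum_eq (ne_of_lt hθ1) N]
  apply le_of_eq
  have hpN : lp ^ N ≠ 0 := (pow_pos hppos N).ne'
  have h1θ : (1:ℝ) - θ ≠ 0 := by linarith
  have hθm1 : θ - 1 ≠ 0 := by intro h; apply h1θ; linarith
  have h1θN' : (1:ℝ) + θ ^ N ≠ 0 := h1θN.ne'
  rw [hqθ]
  have hlpθ : lp - θ * lp ≠ 0 := by
    have : lp - θ * lp = lp * (1 - θ) := by ring
    rw [this]
    exact mul_ne_zero hppos.ne' h1θ
  field_simp
  ring


end
end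

section
/- Let N, M, c be positive integers with c ≤ N ≤ M. Let Y₁, …, Y_M ∈ {−1,+1}^N be such that Y_k ∈ {−𝟏, +𝟏} (the two constant vectors) for every k with c < k ≤ M, and set K = (1/(M·N))·∑_{k=1}^{M} Y_k·Y_k^T, an N×N real symmetric positive-semidefinite matrix. Then the largest eigenvalue satisfies λ₁(K) ≥ 1 − c/M ≥ 1 − N/M, and the second largest eigenvalue satisfies 0 ≤ λ₂(K) ≤ c/M ≤ N/M. -/
/-!
`K` is positive semidefinite with trace `1`, because every diagonal entry of `Y_k Y_kᵀ` is `1`.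
Each of the at least `M - c` constant samples contributes `N²` to `𝟏ᵀ K 𝟏 · MN = ∑_k (Y_k ⬝ 𝟏)²`,
so the Rayleigh bound `𝟏ᵀ K 𝟏 ≤ λ₁ N` gives `λ₁ ≥ 1 - c/M`. The eigenvalues being nonnegative
with sum `1`, also `λ₂ ≤ 1 - λ₁ ≤ c/M`.
-/

open Finset

noncomputable section

open scoped Classical in
/-- `eigVal A i` is the `(i+1)`-st largest eigenvalue (with multiplicity) of a
real symmetric matrix `A` (and `0` if `A` is not symmetric or `i` is out of
range): the eigenvalues of `A` sorted in decreasing order. -/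
noncomputable def eigVal {n : ℕ} (A : Matrix (Fin n) (Fin n) ℝ) (i : ℕ) : ℝ :=
  if h : i < n then
    if hA : A.IsHermitian then
      (hA.eigenvalues ∘ Tuple.sort hA.eigenvalues) (Fin.rev ⟨i, h⟩)
    else 0
  else 0

open Matrix

namespace Matrix.IsHermitian

open scoped ComplexOrder

variable {𝕜 n : Type*} [RCLike 𝕜] [Fintype n] [DecidableEq n] {A : Matrix n n 𝕜}

theorem posSemidef_smul_one_sub (hA : A.IsHermitian) {t : ℝ} (ht : ∀ i, hA.eigenvalues i ≤ t) :
    (t • 1 - A).PosSemidef := by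
  have hdiag : (t • 1 - diagonal (RCLike.ofReal ∘ hA.eigenvalues) : Matrix n n 𝕜) =
      diagonal fun i => ((t - hA.eigenvalues i : ℝ) : 𝕜) := by
    ext i j
    rcases eq_or_ne i j with rfl | hij
    · simp [RCLike.real_smul_eq_coe_mul]
    · simp [hij]
  have hconj : t • 1 - A = hA.eigenvectorUnitary *
      diagonal (fun i => ((t - hA.eigenvalues i : ℝ) : 𝕜)) *
      star (hA.eigenvectorUnitary : Matrix n n 𝕜) := by
    rw [← hdiag, mul_sub, sub_mul, mul_smul_comm, mul_one, smul_mul_assoc,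
      Unitary.mul_star_self_of_mem hA.eigenvectorUnitary.2,
      ← Unitary.conjStarAlgAut_apply (S := 𝕜), ← hA.spectral_theorem]
  rw [hconj, (Unitary.isUnit_coe ..).posSemidef_star_right_conjugate_iff]
  exact PosSemidef.diagonal fun i => by simpa using ht i

theorem dotProduct_mulVec_le {A : Matrix n n ℝ} (hA : A.IsHermitian) {t : ℝ}
    (ht : ∀ i, hA.eigenvalues i ≤ t) (x : n → ℝ) : x ⬝ᵥ (A *ᵥ x) ≤ t * (x ⬝ᵥ x) := by
  have hpsd := (hA.posSemidef_smul_one_sub ht).dotProduct_mulVec_nonneg x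
  simp only [sub_mulVec, smul_mulVec, one_mulVec, dotProduct_sub, dotProduct_smul, star_trivial,
    smul_eq_mul] at hpsd
  linarith

end Matrix.IsHermitian

section eigVal

variable {n : ℕ} {A : Matrix (Fin n) (Fin n) ℝ}

theorem eigVal_of_lt (hA : A.IsHermitian) {i : ℕ} (hi : i < n) :
    eigVal A i = hA.eigenvalues (Tuple.sort hA.eigenvalues (Fin.rev ⟨i, hi⟩)) := by
  rw [eigVal, dif_pos hi, dif_pos hA, Function.comp_apply]

theorem eigVal_of_le {i : ℕ} (hi : n ≤ i) : eigVal A i = 0 := by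
  rw [eigVal, dif_neg hi.not_gt]

theorem eigenvalues_le_eigVal_zero (hA : A.IsHermitian) (j : Fin n) :
    hA.eigenvalues j ≤ eigVal A 0 := by
  have hn : 0 < n := j.pos
  rw [eigVal_of_lt hA hn]
  calc hA.eigenvalues j
      = (hA.eigenvalues ∘ Tuple.sort hA.eigenvalues) ((Tuple.sort hA.eigenvalues).symm j) := by
        simp
    _ ≤ _ := Tuple.monotone_sort _ (Fin.le_rev_iff.2 (Nat.zero_le _))

theorem eigVal_nonneg (hA : A.PosSemidef) (i : ℕ) : 0 ≤ eigVal A i := by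
  unfold eigVal
  split_ifs
  · exact hA.eigenvalues_nonneg _
  all_goals exact le_rfl

theorem sum_range_eigVal (hA : A.IsHermitian) {m : ℕ} (hm : n ≤ m) :
    ∑ i ∈ range m, eigVal A i = A.trace := by
  induction m, hm using Nat.le_induction with
  | base =>
    rw [← Fin.sum_univ_eq_sum_range, hA.trace_eq_sum_eigenvalues]
    calc ∑ i : Fin n, eigVal A i
        = ∑ i : Fin n, hA.eigenvalues ((Fin.revPerm.trans (Tuple.sort hA.eigenvalues)) i) :=
          sum_congr rfl fun i _ => eigVal_of_lt hA i.2
      _ = ∑ i, hA.eigenvalues i := Equiv.sum_comp _ _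
  | succ m hm ih => rw [sum_range_succ, ih, eigVal_of_le hm, add_zero]

theorem eigVal_add_eigVal_le_trace (hA : A.PosSemidef) {i j : ℕ} (hij : i ≠ j) :
    eigVal A i + eigVal A j ≤ A.trace := by
  rw [← sum_range_eigVal hA.isHermitian (m := n + i + j + 1) (by omega)]
  exact add_le_sum (fun k _ => eigVal_nonneg hA k) (by simp only [mem_range]; omega)
    (by simp only [mem_range]; omega) hij

theorem dotProduct_mulVec_le_eigVal_zero_mul (hA : A.IsHermitian) (x : Fin n → ℝ) :
    x ⬝ᵥ (A *ᵥ x) ≤ eigVal A 0 * (x ⬝ᵥ x) :=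
  hA.dotProduct_mulVec_le (eigenvalues_le_eigVal_zero hA) x

end eigVal

section Gram

variable {ι n R : Type*} [Fintype ι] [Fintype n]

theorem dotProduct_sum_vecMulVec_mulVec [CommRing R] (Y : ι → n → R) (x : n → R) :
    x ⬝ᵥ ((∑ k, vecMulVec (Y k) (Y k)) *ᵥ x) = ∑ k, (Y k ⬝ᵥ x) ^ 2 := by
  rw [sum_mulVec, dotProduct_sum]
  refine sum_congr rfl fun k _ => ?_
  rw [vecMulVec_mulVec, op_smul_eq_smul, dotProduct_smul, smul_eq_mul, dotProduct_comm, sq]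

theorem posSemidef_sum_vecMulVec_self [CommRing R] [PartialOrder R] [StarRing R]
    [StarOrderedRing R] [TrivialStar R] (Y : ι → n → R) :
    (∑ k, vecMulVec (Y k) (Y k)).PosSemidef :=
  posSemidef_sum _ fun k _ => by simpa using posSemidef_vecMulVec_self_star (Y k)

theorem dotProduct_self_of_forall_eq_one_or_neg_one [CommRing R] {v : n → R}
    (hv : ∀ i, v i = 1 ∨ v i = -1) : v ⬝ᵥ v = Fintype.card n := by
  rw [dotProduct, Fintype.card_eq_sum_ones, Nat.cast_sum, Nat.cast_one]
  exact sum_congr rfl fun i _ => by rcases hv i with h | h <;> simp [h]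

theorem trace_sum_vecMulVec_self_of_forall_eq_one_or_neg_one [CommRing R] {Y : ι → n → R}
    (hY : ∀ k i, Y k i = 1 ∨ Y k i = -1) :
    (∑ k, vecMulVec (Y k) (Y k)).trace = Fintype.card ι * Fintype.card n := by
  simp only [trace_sum, trace_vecMulVec, dotProduct_self_of_forall_eq_one_or_neg_one (hY _),
    sum_const, card_univ, nsmul_eq_mul]

theorem dotProduct_one_sq_of_eq_one_or_neg_one [CommRing R] {v : n → R} (hv : v = 1 ∨ v = -1) :
    (v ⬝ᵥ 1) ^ 2 = (Fintype.card n : R) ^ 2 := by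
  rcases hv with rfl | rfl <;> simp [one_dotProduct_one]

end Gram

theorem Fin.card_filter_le_val (n m : ℕ) : #{i : Fin n | m ≤ (i : ℕ)} = n - m := by
  have := card_filter_add_card_filter_not (s := univ) fun i : Fin n => (i : ℕ) < m
  simp only [not_lt, card_univ, Fintype.card_fin, Fin.card_filter_val_lt] at this
  omega

theorem sub_mul_sq_le_sum_sq_dotProduct_one {N M c : ℕ} (Y : Fin M → Fin N → ℝ)
    (hconst : ∀ k : Fin M, c ≤ (k : ℕ) → Y k = 1 ∨ Y k = -1) :
    ((M - c : ℕ) : ℝ) * N ^ 2 ≤ ∑ k, (Y k ⬝ᵥ 1) ^ 2 :=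
  calc ((M - c : ℕ) : ℝ) * N ^ 2 = ∑ k ∈ {k : Fin M | c ≤ (k : ℕ)}, (Y k ⬝ᵥ 1) ^ 2 := by
        rw [sum_congr rfl fun k hk =>
            dotProduct_one_sq_of_eq_one_or_neg_one (hconst k (mem_filter.1 hk).2),
          sum_const, Fin.card_filter_le_val, nsmul_eq_mul, Fintype.card_fin]
    _ ≤ ∑ k, (Y k ⬝ᵥ 1) ^ 2 :=
        sum_le_sum_of_subset_of_nonneg (filter_subset _ _) fun k _ _ => sq_nonneg _

/-- **Eigenvalue bounds for the sample covariance matrix when all but at most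
`c` samples are fully aligned.**  Let `c ≤ N ≤ M` be positive integers and let
`Y₁,…,Y_M ∈ {−1,+1}^N` be such that `Y_k` is one of the two constant vectors
`±𝟏` for every `k` with `c < k ≤ M`.  Then for
`K = (1/(MN)) ∑_{k=1}^M Y_k Y_kᵀ`, the largest eigenvalue satisfies
`λ₁(K) ≥ 1 − c/M ≥ 1 − N/M` and the second largest satisfies
`0 ≤ λ₂(K) ≤ c/M ≤ N/M`. -/
theorem sample_covariance_eigenvalue_bounds (N M c : ℕ)
    (hc : 0 < c) (hcN : c ≤ N) (hNM : N ≤ M)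
    (Y : Fin M → Fin N → ℝ)
    (hY : ∀ k i, Y k i = 1 ∨ Y k i = -1)
    (hconst : ∀ k : Fin M, c < (k : ℕ) + 1 →
      ((∀ i, Y k i = 1) ∨ (∀ i, Y k i = -1)))
    (K : Matrix (Fin N) (Fin N) ℝ)
    (hK : K = (1 / ((M : ℝ) * N)) • ∑ k : Fin M, Matrix.vecMulVec (Y k) (Y k)) :
    (1 - (c : ℝ) / M ≤ eigVal K 0 ∧ 1 - (N : ℝ) / M ≤ 1 - (c : ℝ) / M) ∧
    (0 ≤ eigVal K 1 ∧ eigVal K 1 ≤ (c : ℝ) / M ∧ (c : ℝ) / M ≤ (N : ℝ) / M) := by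
  have hN : (0 : ℝ) < N := by exact_mod_cast hc.trans_le hcN
  have hM : (0 : ℝ) < M := by exact_mod_cast (hc.trans_le hcN).trans_le hNM
  have hpsd : K.PosSemidef := hK ▸ (posSemidef_sum_vecMulVec_self Y).smul (by positivity)
  have htrace : K.trace = 1 := by
    rw [hK, trace_smul, trace_sum_vecMulVec_self_of_forall_eq_one_or_neg_one hY,
      Fintype.card_fin, Fintype.card_fin, smul_eq_mul, one_div_mul_cancel (by positivity)]
  have hfirst : 1 - (c : ℝ) / M ≤ eigVal K 0 := by
    have hbound : ((M : ℝ) - c) * N ^ 2 ≤ (eigVal K 0 * M) * N ^ 2 :=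
      calc ((M : ℝ) - c) * N ^ 2 ≤ ∑ k, (Y k ⬝ᵥ 1) ^ 2 := by
            rw [← Nat.cast_sub (hcN.trans hNM)]
            exact sub_mul_sq_le_sum_sq_dotProduct_one Y fun k hk =>
              (hconst k (by omega)).imp funext funext
        _ = (M * N) * (1 ⬝ᵥ (K *ᵥ 1)) := by
            rw [hK, smul_mulVec, dotProduct_smul, smul_eq_mul, dotProduct_sum_vecMulVec_mulVec,
              ← mul_assoc, mul_one_div_cancel (by positivity), one_mul]
        _ ≤ (M * N) * (eigVal K 0 * N) := by
            gcongr
            simpa using dotProduct_mulVec_le_eigVal_zero_mul hpsd.isHermitian 1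
        _ = (eigVal K 0 * M) * N ^ 2 := by ring
    rw [one_sub_div hM.ne', div_le_iff₀ hM]
    exact le_of_mul_le_mul_right hbound (by positivity)
  have hfirstTwo := eigVal_add_eigVal_le_trace hpsd zero_ne_one
  have hcN' : (c : ℝ) / M ≤ N / M := by gcongr
  exact ⟨⟨hfirst, by linarith⟩, eigVal_nonneg hpsd 1, by linarith, hcN'⟩
end
end
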